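/- arXiv:1810.12086 — 12 statements merged into one kernel-verified Lean document; each statement's English description precedes it below -/
import Mathlib

section
/- In the greedy decreasing assignment of items a_1 ≥ ... ≥ a_n to m boxes, if at step k > m the item a_k is placed in a box that becomes the new unique maximum-load box, then the new difference between maximum and minimum box load is at most a_k, and a_k < C̃ where C̃ = (Σ_{i=1}^n a_i)/m. -/
/-- In the greedy decreasing assignment, if at a step `k` beyond the first `m` steps the
item `a k` is placed in a box that becomes the new unique maximum-load box, then the new
difference between maximum and minimum load is at most `a k`, and `a k < C̃ = (∑ a)/m`. -/
theorem greedy_new_max_step (n m : ℕ) (hn : 0 < n) (hm : 0 < m)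
    (a : Fin n → ℝ) (ha_pos : ∀ i, 0 < a i) (ha_sorted : Antitone a)
    (b : Fin n → Fin m)
    (hgreedy : ∀ i : Fin n, ∀ j : Fin m,
      ∑ i' ∈ Finset.univ.filter (fun i' : Fin n => (i' : ℕ) < (i : ℕ) ∧ b i' = b i), a i'
        ≤ ∑ i' ∈ Finset.univ.filter (fun i' : Fin n => (i' : ℕ) < (i : ℕ) ∧ b i' = j), a i')
    (k : Fin n) (hk : m ≤ (k : ℕ))
    (hnewmax : ∀ j : Fin m, j ≠ b k →
      (∑ i' ∈ Finset.univ.filter (fun i' : Fin n => (i' : ℕ) ≤ (k : ℕ) ∧ b i' = j), a i')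
        < ∑ i' ∈ Finset.univ.filter (fun i' : Fin n => (i' : ℕ) ≤ (k : ℕ) ∧ b i' = b k), a i') :
    (∀ j : Fin m,
      (∑ i' ∈ Finset.univ.filter (fun i' : Fin n => (i' : ℕ) ≤ (k : ℕ) ∧ b i' = b k), a i')
        - (∑ i' ∈ Finset.univ.filter (fun i' : Fin n => (i' : ℕ) ≤ (k : ℕ) ∧ b i' = j), a i')
        ≤ a k)
    ∧ a k < (∑ i, a i) / m := by
  constructor
  · intro j
    have hsplit : (Finset.univ.filter (fun i' : Fin n => (i' : ℕ) ≤ (k : ℕ) ∧ b i' = b k))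
        = insert k (Finset.univ.filter (fun i' : Fin n => (i' : ℕ) < (k : ℕ) ∧ b i' = b k)) := by
      ext i'
      simp only [Finset.mem_filter, Finset.mem_insert, Finset.mem_univ, true_and]
      constructor
      · rintro ⟨h1, h2⟩
        rcases lt_or_eq_of_le h1 with h | h
        · exact Or.inr ⟨h, h2⟩
        · exact Or.inl (Fin.ext h)
      · rintro (rfl | ⟨h1, h2⟩)
        · exact ⟨le_rfl, rfl⟩
        · exact ⟨le_of_lt h1, h2⟩
    have hknot : k ∉ Finset.univ.filter (fun i' : Fin n => (i' : ℕ) < (k : ℕ) ∧ b i' = b k) := by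
      simp
    rw [hsplit, Finset.sum_insert hknot]
    have h1 := hgreedy k j
    have h2 : (∑ i' ∈ Finset.univ.filter (fun i' : Fin n => (i' : ℕ) < (k : ℕ) ∧ b i' = j), a i')
        ≤ ∑ i' ∈ Finset.univ.filter (fun i' : Fin n => (i' : ℕ) ≤ (k : ℕ) ∧ b i' = j), a i' := by
      apply Finset.sum_le_sum_of_subset_of_nonneg
      · intro x hx
        simp only [Finset.mem_filter, Finset.mem_univ, true_and] at hx ⊢
        exact ⟨le_of_lt hx.1, hx.2⟩
      · intro i _ _; exact (ha_pos i).le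
    linarith
  · -- a k < (∑ a)/m
    have hkn : (k : ℕ) < n := k.isLt
    have hcard : (Finset.univ.filter (fun i : Fin n => (i : ℕ) ≤ (k : ℕ))).card = (k : ℕ) + 1 := by
      have : (Finset.univ.filter (fun i : Fin n => (i : ℕ) ≤ (k : ℕ)))
          = (Finset.range ((k : ℕ) + 1)).attachFin (fun x hx => lt_of_lt_of_le
            (Finset.mem_range.mp hx) (Nat.succ_le_of_lt hkn)) := by
        ext i
        simp [Nat.lt_succ_iff]
      rw [this, Finset.card_attachFin, Finset.card_range]
    have hsum1 : ((k : ℕ) + 1 : ℝ) * a k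
        ≤ ∑ i ∈ Finset.univ.filter (fun i : Fin n => (i : ℕ) ≤ (k : ℕ)), a i := by
      have := Finset.card_nsmul_le_sum
        (Finset.univ.filter (fun i : Fin n => (i : ℕ) ≤ (k : ℕ))) a (a k)
        (fun i hi => by
          apply ha_sorted
          simp only [Finset.mem_filter] at hi
          exact Fin.le_def.mpr hi.2)
      rw [hcard] at this
      simpa [nsmul_eq_mul, add_mul] using this
    have hsum2 : (∑ i ∈ Finset.univ.filter (fun i : Fin n => (i : ℕ) ≤ (k : ℕ)), a i)
        ≤ ∑ i, a i := by
      apply Finset.sum_le_sum_of_subset_of_nonneg (Finset.filter_subset _ _)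
      intro i _ _; exact (ha_pos i).le
    have hak : 0 < a k := ha_pos k
    have hmk : (m : ℝ) < (k : ℕ) + 1 := by exact_mod_cast Nat.lt_succ_of_le hk
    have : (m : ℝ) * a k < ∑ i, a i := by
      calc (m : ℝ) * a k < ((k : ℕ) + 1 : ℝ) * a k := by
            exact mul_lt_mul_of_pos_right hmk hak
        _ ≤ ∑ i, a i := le_trans hsum1 hsum2
    rw [lt_div_iff₀ (by exact_mod_cast hm)]
    linarith
end

section
/- Let C_1, ..., C_m be nonnegative reals with average C̃ and with max_j C_j - min_j C_j ≤ C̃. Then there exists a permutation σ of {1,...,m} and coefficients λ_ℓ¹, λ_ℓ² ∈ [0,1] for each ℓ such that λ_ℓ¹ + λ_{ℓ-1}² = 1 (indices cyclic, i.e., the fractions of group σ(ℓ) split between two consecutive bins sum to 1) and for every ℓ: λ_ℓ¹·C_{σ(ℓ)} + λ_ℓ²·C_{σ(ℓ+1)} = C̃, where σ(m+1) := σ(1). -/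
/-- Greedy ordering lemma: values in `[-β, α]` summing (with initial `q`) to `0`
can be ordered so that all partial sums stay in `[-β, α]`. -/
lemma balanced_order_lemma (α β : ℝ) :
    ∀ (n : ℕ) (D : Fin n → ℝ) (q : ℝ), (∀ k, D k ∈ Set.Icc (-β) α) →
      q ∈ Set.Icc (-β) α → q + ∑ k, D k = 0 →
      ∃ π : Equiv.Perm (Fin n), ∀ j : Fin n,
        (q + ∑ k, if k < j then D (π k) else 0) ∈ Set.Icc (-β) α ∧
        (q + ∑ k, if k ≤ j then D (π k) else 0) ∈ Set.Icc (-β) α := by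
  intro n
  induction n with
  | zero => exact fun D q _ _ _ => ⟨1, fun j => j.elim0⟩
  | succ n ih =>
    intro D q hD hq htot
    simp only [Set.mem_Icc] at hq hD
    obtain ⟨i0, hi0⟩ : ∃ i0, -β ≤ q + D i0 ∧ q + D i0 ≤ α := by
      rcases le_or_gt 0 q with h | h
      · obtain ⟨i0, hi0⟩ : ∃ i0, D i0 ≤ 0 := by
          by_contra hcon
          push_neg at hcon
          have hpos : 0 < ∑ k, D k :=
            Finset.sum_pos (fun k _ => hcon k) Finset.univ_nonempty
          linarith
        exact ⟨i0, by constructor <;> [linarith [(hD i0).1]; linarith]⟩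
      · obtain ⟨i0, hi0⟩ : ∃ i0, 0 < D i0 := by
          by_contra hcon
          push_neg at hcon
          have hneg : ∑ k, D k ≤ 0 := Finset.sum_nonpos (fun k _ => hcon k)
          linarith
        exact ⟨i0, by constructor <;> [linarith; linarith [(hD i0).2]]⟩
    set q' := q + D i0 with hq'def
    have htot' : q' + ∑ k, D (i0.succAbove k) = 0 := by
      have h := Fin.sum_univ_succAbove D i0
      rw [h] at htot
      rw [hq'def]; linarith
    obtain ⟨π', hπ'⟩ := ih (fun k => D (i0.succAbove k)) q'
      (fun k => hD _ |> fun h => Set.mem_Icc.mpr h) (Set.mem_Icc.mpr hi0) htot'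
    set π : Equiv.Perm (Fin (n + 1)) :=
      (finSuccEquiv' (0 : Fin (n + 1))).trans
        ((Equiv.optionCongr π').trans (finSuccEquiv' i0).symm) with hπdef
    have hπ0 : π 0 = i0 := by
      simp [hπdef, finSuccEquiv'_at]
    have hπs : ∀ j : Fin n, π j.succ = i0.succAbove (π' j) := by
      intro j
      have h1 : (finSuccEquiv' (0 : Fin (n + 1))) j.succ = some j := by
        have := finSuccEquiv'_succAbove (0 : Fin (n + 1)) j
        rwa [Fin.succAbove_zero] at this
      simp [hπdef, h1, finSuccEquiv'_symm_some]
    refine ⟨π, ?_⟩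
    intro j
    induction j using Fin.cases with
    | zero =>
      constructor
      · simpa [Fin.not_lt_zero, Set.mem_Icc] using hq
      · have hs : (∑ k, if k ≤ (0 : Fin (n + 1)) then D (π k) else 0) = D i0 := by
          rw [Fin.sum_univ_succ]
          simp [Fin.le_zero_iff, hπ0, Fin.succ_ne_zero]
        rw [hs]
        exact Set.mem_Icc.mpr hi0
    | succ j' =>
      have e1 : (∑ k, if k < j'.succ then D (π k) else 0)
          = D i0 + ∑ k, if k < j' then D (π (Fin.succ k)) else 0 := by
        rw [Fin.sum_univ_succ]
        simp [Fin.succ_pos, hπ0, Fin.succ_lt_succ_iff]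
      have e2 : (∑ k, if k ≤ j'.succ then D (π k) else 0)
          = D i0 + ∑ k, if k ≤ j' then D (π (Fin.succ k)) else 0 := by
        rw [Fin.sum_univ_succ]
        simp [Fin.zero_le, hπ0, Fin.succ_le_succ_iff]
      have h1 := (hπ' j').1
      have h2 := (hπ' j').2
      simp only [Set.mem_Icc] at h1 h2 ⊢
      have hrw : ∀ k : Fin n, D (π (Fin.succ k)) = D (i0.succAbove (π' k)) := by
        intro k; rw [hπs]
      constructor
      · rw [e1]
        have : (∑ k, if k < j' then D (π (Fin.succ k)) else 0)
            = ∑ k, if k < j' then D (i0.succAbove (π' k)) else 0 :=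
          Finset.sum_congr rfl (fun k _ => by rw [hrw])
        rw [this]
        constructor <;> [linarith [h1.1]; linarith [h1.2]]
      · rw [e2]
        have : (∑ k, if k ≤ j' then D (π (Fin.succ k)) else 0)
            = ∑ k, if k ≤ j' then D (i0.succAbove (π' k)) else 0 :=
          Finset.sum_congr rfl (fun k _ => by rw [hrw])
        rw [this]
        constructor <;> [linarith [h2.1]; linarith [h2.2]]

/-- Given nonnegative group sizes `C 1, ..., C m` with average `C̃` and
`max - min ≤ C̃`, there is a cyclic ordering `σ` of the groups and fractions
`λ¹, λ²  ∈ [0,1]` such that each group `σ(ℓ)` is split between bins `ℓ` and `ℓ - 1`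
(fractions summing to 1), and every bin receives total exactly `C̃`. -/
theorem balanced_cyclic_distribution (m : ℕ) [NeZero m]
    (C : Fin m → ℝ) (hC : ∀ j, 0 ≤ C j)
    (hgap : ∀ j j' : Fin m, C j - C j' ≤ (∑ j, C j) / m) :
    ∃ (σ : Equiv.Perm (Fin m)) (l1 l2 : Fin m → ℝ),
      (∀ ℓ, l1 ℓ ∈ Set.Icc (0 : ℝ) 1 ∧ l2 ℓ ∈ Set.Icc (0 : ℝ) 1) ∧
      (∀ ℓ : Fin m, l1 ℓ + l2 (ℓ - 1) = 1) ∧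
      (∀ ℓ : Fin m, l1 ℓ * C (σ ℓ) + l2 ℓ * C (σ (ℓ + 1)) = (∑ j, C j) / m) := by
  have hm : 0 < m := Nat.pos_of_ne_zero (NeZero.ne m)
  have hmR : (0 : ℝ) < (m : ℝ) := by exact_mod_cast hm
  set t : ℝ := (∑ j, C j) / m with ht
  have htm : (m : ℝ) * t = ∑ j, C j := by
    rw [ht]; field_simp
  -- max and min
  obtain ⟨jmax, -, hjmax⟩ := Finset.exists_max_image Finset.univ C ⟨0, Finset.mem_univ 0⟩
  obtain ⟨jmin, -, hjmin⟩ := Finset.exists_min_image Finset.univ C ⟨0, Finset.mem_univ 0⟩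
  have hjmax' : ∀ j, C j ≤ C jmax := fun j => hjmax j (Finset.mem_univ j)
  have hjmin' : ∀ j, C jmin ≤ C j := fun j => hjmin j (Finset.mem_univ j)
  set α : ℝ := C jmax - t with hαdef
  set β : ℝ := t - C jmin with hβdef
  have hsummax : (∑ j, C j) ≤ (m : ℝ) * C jmax := by
    calc (∑ j, C j) ≤ ∑ _j : Fin m, C jmax :=
          Finset.sum_le_sum (fun j _ => hjmax' j)
      _ = (m : ℝ) * C jmax := by
          simp [Finset.sum_const, nsmul_eq_mul]
  have hsummin : (m : ℝ) * C jmin ≤ ∑ j, C j := by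
    calc (m : ℝ) * C jmin = ∑ _j : Fin m, C jmin := by
          simp [Finset.sum_const, nsmul_eq_mul]
      _ ≤ ∑ j, C j := Finset.sum_le_sum (fun j _ => hjmin' j)
  have hα : 0 ≤ α := by
    rw [hαdef]
    nlinarith [htm]
  have hβ : 0 ≤ β := by
    rw [hβdef]
    nlinarith [htm]
  have hαβ : α + β ≤ t := by
    have := hgap jmax jmin
    rw [hαdef, hβdef]; linarith
  set D : Fin m → ℝ := fun k => C k - t with hDdef
  have hD : ∀ k, D k ∈ Set.Icc (-β) α := by
    intro k
    simp only [Set.mem_Icc, hDdef, hαdef, hβdef]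
    constructor <;> [linarith [hjmin' k]; linarith [hjmax' k]]
  have htot : (0 : ℝ) + ∑ k, D k = 0 := by
    simp only [hDdef]
    rw [Finset.sum_sub_distrib]
    simp [Finset.sum_const, nsmul_eq_mul]
    linarith [htm]
  have hq0 : (0 : ℝ) ∈ Set.Icc (-β) α := Set.mem_Icc.mpr ⟨by linarith, hα⟩
  obtain ⟨π, hπ⟩ := balanced_order_lemma α β m D 0 hD hq0 htot
  -- prefix sums
  set Q : Fin m → ℝ := fun j => ∑ k, if k ≤ j then D (π k) else 0 with hQdef
  set Ql : Fin m → ℝ := fun j => ∑ k, if k < j then D (π k) else 0 with hQldef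
  have hQbd : ∀ j, -β ≤ Q j ∧ Q j ≤ α := by
    intro j
    have := (hπ j).2
    simp only [Set.mem_Icc, zero_add] at this
    exact this
  have hQlbd : ∀ j, -β ≤ Ql j ∧ Ql j ≤ α := by
    intro j
    have := (hπ j).1
    simp only [Set.mem_Icc, zero_add] at this
    exact this
  have hQQl : ∀ j, Q j = Ql j + D (π j) := by
    intro j
    have hpt : ∀ k : Fin m, (if k ≤ j then D (π k) else 0)
        = (if k < j then D (π k) else 0) + (if k = j then D (π k) else 0) := by
      intro k
      rcases lt_trichotomy k j with h | h | h
      · simp [le_of_lt h, h, ne_of_lt h]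
      · simp [h]
      · simp [not_le.mpr h, asymm h, (ne_of_gt h)]
    rw [hQdef, hQldef]
    simp only []
    rw [Finset.sum_congr rfl (fun k _ => hpt k), Finset.sum_add_distrib]
    congr 1
    simp [Finset.sum_ite_eq' Finset.univ j]
  -- the split points
  set x : Fin m → ℝ := fun ℓ => β + Q ℓ with hxdef
  have hx0 : ∀ ℓ, 0 ≤ x ℓ := by
    intro ℓ; rw [hxdef]; simp only []
    linarith [(hQbd ℓ).1]
  have hxc : ∀ ℓ, x ℓ ≤ C (π ℓ) := by
    intro ℓ
    have h1 := hQQl ℓ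
    have h2 := (hQlbd ℓ).2
    have : C (π ℓ) = D (π ℓ) + t := by rw [hDdef]; ring
    rw [hxdef]; simp only []
    rw [this, h1]
    linarith
  -- key recursion  Q (ℓ+1) = Q ℓ + D (π (ℓ+1))
  have hQstep : ∀ ℓ : Fin m, Q (ℓ + 1) = Q ℓ + D (π (ℓ + 1)) := by
    obtain ⟨n, rfl⟩ : ∃ n, m = n + 1 := ⟨m - 1, by have := NeZero.ne m; omega⟩
    intro ℓ
    by_cases hv : ℓ = Fin.last n
    · -- wrap-around case
      have hw : ℓ + 1 = 0 := by rw [hv, Fin.last_add_one]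
      have hQtop : Q ℓ = 0 := by
        have hall : ∀ k : Fin (n + 1), k ≤ ℓ := by
          intro k
          rw [Fin.le_def, hv, Fin.val_last]
          exact Nat.lt_succ_iff.mp k.isLt
        have h1 : Q ℓ = ∑ k, D (π k) := by
          rw [hQdef]; simp only []
          exact Finset.sum_congr rfl (fun k _ => by rw [if_pos (hall k)])
        rw [h1, Equiv.sum_comp π D]
        linarith [htot]
      have hQ0 : Q (0 : Fin (n + 1)) = D (π 0) := by
        have h1 : Q (0 : Fin (n + 1)) = ∑ k, if k = 0 then D (π k) else 0 := by
          rw [hQdef]; simp only []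
          exact Finset.sum_congr rfl (fun k _ => by rw [if_congr Fin.le_zero_iff rfl rfl])
        rw [h1]
        simp
      rw [hw, hQ0, hQtop]
      ring
    · -- no wrap
      have hval : ((ℓ + 1 : Fin (n + 1)) : ℕ) = ℓ.val + 1 := by
        apply Fin.val_add_one_of_lt
        rw [Fin.lt_def, Fin.val_last]
        have h2 := ℓ.isLt
        have h3 : ℓ.val ≠ n := fun h => hv (Fin.ext (by rw [Fin.val_last]; exact h))
        omega
      have hpt : ∀ k : Fin (n + 1), (if k ≤ ℓ + 1 then D (π k) else 0)
          = (if k ≤ ℓ then D (π k) else 0) + (if k = ℓ + 1 then D (π k) else 0) := by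
        intro k
        simp only [Fin.le_def, Fin.ext_iff, hval]
        split_ifs <;> first | omega | ring
      have h4 : Q (ℓ + 1) = Q ℓ + ∑ k, if k = ℓ + 1 then D (π k) else 0 := by
        rw [hQdef]; simp only []
        rw [Finset.sum_congr rfl (fun k _ => hpt k), Finset.sum_add_distrib]
      rw [h4]
      congr 1
      simp
  have hrec : ∀ ℓ : Fin m, x ℓ + C (π (ℓ + 1)) - x (ℓ + 1) = t := by
    intro ℓ
    have h1 := hQstep ℓ
    have h2 : C (π (ℓ + 1)) = D (π (ℓ + 1)) + t := by rw [hDdef]; ring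
    rw [hxdef]; simp only []
    rw [h2, h1]
    ring
  -- define the fractions
  set l1 : Fin m → ℝ := fun ℓ => if C (π ℓ) = 0 then 0 else x ℓ / C (π ℓ) with hl1def
  set l2 : Fin m → ℝ := fun ℓ => 1 - l1 (ℓ + 1) with hl2def
  have hl1 : ∀ ℓ, 0 ≤ l1 ℓ ∧ l1 ℓ ≤ 1 := by
    intro ℓ
    rw [hl1def]; simp only []
    by_cases h : C (π ℓ) = 0
    · simp [h]
    · rw [if_neg h]
      have hpos : 0 < C (π ℓ) := (hC _).lt_of_ne (Ne.symm h)
      exact ⟨div_nonneg (hx0 ℓ) hpos.le, (div_le_one hpos).mpr (hxc ℓ)⟩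
  have hmul : ∀ ℓ, l1 ℓ * C (π ℓ) = x ℓ := by
    intro ℓ
    rw [hl1def]; simp only []
    by_cases h : C (π ℓ) = 0
    · rw [if_pos h, h, mul_zero]
      have : x ℓ ≤ 0 := by rw [← h]; exact hxc ℓ
      linarith [hx0 ℓ]
    · rw [if_neg h, div_mul_cancel₀ _ h]
  refine ⟨π, l1, l2, ?_, ?_, ?_⟩
  · intro ℓ
    refine ⟨Set.mem_Icc.mpr ⟨(hl1 ℓ).1, (hl1 ℓ).2⟩, Set.mem_Icc.mpr ⟨?_, ?_⟩⟩
    · rw [hl2def]; simp only []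
      linarith [(hl1 (ℓ + 1)).2]
    · rw [hl2def]; simp only []
      linarith [(hl1 (ℓ + 1)).1]
  · intro ℓ
    rw [hl2def]; simp only []
    rw [sub_add_cancel]
    ring
  · intro ℓ
    simp only [hl2def]
    linear_combination (hmul ℓ) + (hrec ℓ) - (hmul (ℓ + 1))
end

section
/- Let a_1 ≥ a_2 ≥ ... ≥ a_n > 0 be reals, S = Σ a_i, C > 0 with a_1 - a_n ≤ C, and set m = ⌈S/C⌉ with m ≤ n. Then there exists an assignment of fractions λ_{ij} ∈ [0,1] of object i to bin j ∈ {1,...,m} such that: (1) Σ_j λ_{ij} = 1 for each i; (2) each object has positive fraction in at most 2 bins; (3) Σ_i a_i λ_{ij} ≤ C for each bin j; and (4) within each bin j, the nonzero fractions λ_{ij} take at most 2 distinct values (corresponding to two stages, each stage having a single proportionality factor per bin). -/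
open Finset

/-- Specification: the objects of `R` can be partitioned into blocks `W 0, ..., W (μ-1)`,
block `j` being split between bin `j` (fraction `u j`) and bin `j+1` (fraction `1 - u j`),
with an extra incoming load `x` in bin `0`, all bins having load at most `C`,
and nothing spilling out of bin `μ-1`. -/
def PackSpec {n : ℕ} (a : Fin n → ℝ) (C : ℝ) (μ : ℕ) (R : Finset (Fin n)) (x : ℝ) : Prop :=
  ∃ (W : ℕ → Finset (Fin n)) (u : ℕ → ℝ),
    (∀ j k, j ≠ k → Disjoint (W j) (W k)) ∧
    (∀ j, W j ⊆ R) ∧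
    (∀ i ∈ R, ∃ j, i ∈ W j) ∧
    (∀ j, 0 ≤ u j ∧ u j ≤ 1) ∧
    (∀ j, μ ≤ j → W j = ∅) ∧
    (∀ j, μ ≤ j + 1 → (1 - u j) * ∑ i ∈ W j, a i = 0) ∧
    (0 < μ → x + u 0 * ∑ i ∈ W 0, a i ≤ C) ∧
    (∀ j, j + 1 < μ → (1 - u j) * (∑ i ∈ W j, a i) + u (j+1) * ∑ i ∈ W (j+1), a i ≤ C)

lemma pack_glue {n : ℕ} (a : Fin n → ℝ) (C : ℝ) (hpos : ∀ i, 0 < a i) (μ : ℕ)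
    (R W₀ : Finset (Fin n)) (u₀ x x' : ℝ)
    (hW₀R : W₀ ⊆ R) (hu₀0 : 0 ≤ u₀) (hu₀1 : u₀ ≤ 1)
    (hload0 : x + u₀ * ∑ i ∈ W₀, a i ≤ C)
    (hcarry : (1 - u₀) * ∑ i ∈ W₀, a i = x')
    (hx'0 : 0 ≤ x')
    (hcap' : x' + ∑ i ∈ R \ W₀, a i ≤ μ * C)
    (hrec : PackSpec a C μ (R \ W₀) x') :
    PackSpec a C (μ+1) R x := by
  obtain ⟨W', u', h1, h2, h3, h4, h5, h6, h7, h8⟩ := hrec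
  refine ⟨fun j => Nat.casesOn j W₀ W', fun j => Nat.casesOn j u₀ u', ?_, ?_, ?_, ?_, ?_, ?_, ?_, ?_⟩
  · rintro (_ | j) (_ | k) hjk
    · exact absurd rfl hjk
    · exact Finset.disjoint_left.2 fun i hi hik =>
        (Finset.mem_sdiff.1 (h2 k hik)).2 hi
    · exact Finset.disjoint_left.2 fun i hi hik =>
        (Finset.mem_sdiff.1 (h2 j hi)).2 hik
    · exact h1 j k (fun h => hjk (by rw [h]))
  · rintro (_ | j)
    · exact hW₀R
    · exact (h2 j).trans (Finset.sdiff_subset)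
  · intro i hi
    by_cases hiW : i ∈ W₀
    · exact ⟨0, hiW⟩
    · obtain ⟨j, hj⟩ := h3 i (Finset.mem_sdiff.2 ⟨hi, hiW⟩)
      exact ⟨j + 1, hj⟩
  · rintro (_ | j)
    · exact ⟨hu₀0, hu₀1⟩
    · exact h4 j
  · rintro (_ | j) hj
    · omega
    · exact h5 j (by omega)
  · rintro (_ | j) hj
    · -- μ + 1 ≤ 0 + 1 so μ = 0
      have hμ : μ = 0 := by omega
      have hsum : (0:ℝ) ≤ ∑ i ∈ R \ W₀, a i :=
        Finset.sum_nonneg fun i _ => (hpos i).le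
      have : x' ≤ 0 := by
        rw [hμ] at hcap'; push_cast at hcap'; linarith
      have hx0 : x' = 0 := le_antisymm this hx'0
      simpa [hx0] using hcarry
    · exact h6 j (by omega)
  · intro _
    exact hload0
  · rintro (_ | j) hj
    · have hμ : 0 < μ := by omega
      have := h7 hμ
      show (1 - u₀) * (∑ i ∈ W₀, a i) + u' 0 * ∑ i ∈ W' 0, a i ≤ C
      rw [hcarry]; exact this
    · exact h8 j (by omega)


theorem pack_core {n : ℕ} (a : Fin n → ℝ) (C δ : ℝ) (hC : 0 < C)
    (hpos : ∀ i, 0 < a i) (hlb : ∀ i, δ ≤ a i) (hub : ∀ i, a i ≤ C + δ) :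
    ∀ (μ : ℕ) (R : Finset (Fin n)) (x : ℝ), 0 ≤ x → x ≤ C →
      x + ∑ i ∈ R, a i ≤ μ * C →
      (x + ∑ i ∈ R, (a i - C) ≤ 0 ∨ ∀ i ∈ R, a i ≤ C) →
      PackSpec a C μ R x := by
  intro μ
  induction μ with
  | zero =>
    intro R x hx0 hxC hcap hled
    have hsum : (0:ℝ) ≤ ∑ i ∈ R, a i := Finset.sum_nonneg fun i _ => (hpos i).le
    push_cast at hcap
    have hx : x = 0 := le_antisymm (by linarith) hx0
    have hR : R = ∅ := by
      by_contra hne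
      obtain ⟨i, hi⟩ := Finset.nonempty_iff_ne_empty.2 hne
      have : a i ≤ ∑ i ∈ R, a i :=
        Finset.single_le_sum (fun i _ => (hpos i).le) hi
      have := hpos i
      linarith
    refine ⟨fun _ => ∅, fun _ => 1, ?_, ?_, ?_, ?_, ?_, ?_, ?_, ?_⟩ <;>
      simp [hR]
  | succ μ ih =>
    intro R x hx0 hxC hcap hled
    have hcast : ((μ+1 : ℕ) : ℝ) * C = μ * C + C := by push_cast; ring
    rw [hcast] at hcap
    by_cases hA : ∃ i ∈ R, C - x ≤ a i ∧ a i ≤ 2*C - x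
    · -- Case A : emit a singleton block
      obtain ⟨i0, hi0R, hA1, hA2⟩ := hA
      have hai0 : 0 < a i0 := hpos i0
      set x' := x + a i0 - C with hx'def
      have hx'0 : 0 ≤ x' := by simp only [hx'def]; linarith
      have hx'C : x' ≤ C := by simp only [hx'def]; linarith
      have hsub : {i0} ⊆ R := Finset.singleton_subset_iff.2 hi0R
      have hsumsd : ∑ i ∈ R \ {i0}, a i = ∑ i ∈ R, a i - a i0 := by
        have := Finset.sum_sdiff (f := a) hsub
        rw [Finset.sum_singleton] at this
        linarith
      have hcap' : x' + ∑ i ∈ R \ {i0}, a i ≤ μ * C := by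
        rw [hsumsd]; simp only [hx'def]; linarith
      have hled' : x' + ∑ i ∈ R \ {i0}, (a i - C) ≤ 0 ∨ ∀ i ∈ R \ {i0}, a i ≤ C := by
        rcases hled with hl | hr
        · left
          have := Finset.sum_sdiff (f := fun i => a i - C) hsub
          rw [Finset.sum_singleton] at this
          have heq : ∑ i ∈ R \ {i0}, (a i - C) = ∑ i ∈ R, (a i - C) - (a i0 - C) := by
            linarith
          rw [heq]; simp only [hx'def]; linarith
        · exact Or.inr fun i hi => hr i (Finset.mem_sdiff.1 hi).1
      have hrec := ih (R \ {i0}) x' hx'0 hx'C hcap' hled'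
      refine pack_glue a C hpos μ R {i0} ((C - x)/a i0) x x' hsub ?_ ?_ ?_ ?_ hx'0 hcap' hrec
      · exact div_nonneg (by linarith) hai0.le
      · rw [div_le_one hai0]; linarith
      · rw [Finset.sum_singleton, div_mul_cancel₀ _ (ne_of_gt hai0)]; linarith
      · rw [Finset.sum_singleton]
        field_simp
        ring
    · -- Case B : all objects are strictly smaller than C - x
      have hB : ∀ i ∈ R, a i < C - x := by
        intro i hi
        by_contra hge
        push_neg at hge
        have hbig : 2*C - x < a i := by
          by_contra hle
          push_neg at hle
          exact hA ⟨i, hi, hge, hle⟩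
        have hδ : C - x < δ := by have := hub i; linarith
        have hsmall : ∃ j ∈ R, a j ≤ C := by
          rcases hled with hl | hr
          · by_contra hall
            push_neg at hall
            have hpos' : 0 < ∑ i ∈ R, (a i - C) :=
              Finset.sum_pos (fun j hj => by linarith [hall j hj]) ⟨i, hi⟩
            linarith
          · exact ⟨i, hi, hr i hi⟩
        obtain ⟨j, hjR, hjC⟩ := hsmall
        exact hA ⟨j, hjR, by constructor <;> [linarith [hlb j]; linarith]⟩
      by_cases hfit : x + ∑ i ∈ R, a i ≤ C
      · -- everything fits in one bin
        refine ⟨fun j => Nat.casesOn j R (fun _ => ∅), fun _ => 1, ?_, ?_, ?_, ?_, ?_, ?_, ?_, ?_⟩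
        · rintro (_ | j) (_ | k) hjk <;> simp_all
        · rintro (_ | j) <;> simp
        · intro i hi; exact ⟨0, hi⟩
        · intro j; norm_num
        · rintro (_ | j) hj
          · omega
          · rfl
        · rintro (_ | j) hj <;> simp
        · intro _; simpa using hfit
        · rintro (_ | j) hj <;> simp [hC.le]
      · push_neg at hfit
        -- find a minimal crossing subset
        have hRS : R ∈ R.powerset.filter (fun T => C ≤ x + ∑ i ∈ T, a i) := by
          simp only [Finset.mem_filter, Finset.mem_powerset]
          exact ⟨le_refl R, hfit.le⟩
        obtain ⟨W₀, hW₀mem, hW₀min⟩ :=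
          Finset.exists_min_image _ Finset.card ⟨R, hRS⟩
        simp only [Finset.mem_filter, Finset.mem_powerset] at hW₀mem
        obtain ⟨hW₀R, hW₀C⟩ := hW₀mem
        have hsumsd : ∑ i ∈ R \ W₀, a i = ∑ i ∈ R, a i - ∑ i ∈ W₀, a i := by
          have := Finset.sum_sdiff (f := a) hW₀R
          linarith
        rcases Finset.eq_empty_or_nonempty W₀ with hW₀e | hW₀ne
        · -- x = C exactly, emit a pure-carry bin
          have hxC' : x = C := by
            rw [hW₀e] at hW₀C; simp at hW₀C; linarith
          have hcap' : (0:ℝ) + ∑ i ∈ R \ W₀, a i ≤ μ * C := by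
            rw [hsumsd, hW₀e]; simp; linarith
          have hled' : (0:ℝ) + ∑ i ∈ R \ W₀, (a i - C) ≤ 0 ∨ ∀ i ∈ R \ W₀, a i ≤ C :=
            Or.inr fun i hi => by
              have := hB i (Finset.mem_sdiff.1 hi).1; linarith
          have hrec := ih (R \ W₀) 0 le_rfl hC.le hcap' hled'
          refine pack_glue a C hpos μ R W₀ 1 x 0 (hW₀e ▸ Finset.empty_subset R)
            zero_le_one le_rfl ?_ ?_ le_rfl hcap' hrec
          · rw [hW₀e]; simp; linarith
          · rw [hW₀e]; simp
        · -- emit a block W₀ filled to exactly C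
          have hWpos : 0 < ∑ i ∈ W₀, a i :=
            Finset.sum_pos (fun i _ => hpos i) hW₀ne
          obtain ⟨w, hw⟩ := hW₀ne
          have hmin_w : x + ∑ i ∈ W₀.erase w, a i < C := by
            by_contra hge
            push_neg at hge
            have hmem : W₀.erase w ∈ R.powerset.filter (fun T => C ≤ x + ∑ i ∈ T, a i) := by
              simp only [Finset.mem_filter, Finset.mem_powerset]
              exact ⟨(Finset.erase_subset w W₀).trans hW₀R, hge⟩
            have := hW₀min _ hmem
            have hlt : (W₀.erase w).card < W₀.card := Finset.card_erase_lt_of_mem hw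
            omega
          have hsum_erase : ∑ i ∈ W₀.erase w, a i + a w = ∑ i ∈ W₀, a i :=
            Finset.sum_erase_add W₀ a hw
          set x' := x + ∑ i ∈ W₀, a i - C with hx'def
          have hx'0 : 0 ≤ x' := by simp only [hx'def]; linarith
          have hawC : a w < C := by
            have := hB w (hW₀R hw); linarith
          have hx'C : x' ≤ C := by
            simp only [hx'def]; linarith
          have hcap' : x' + ∑ i ∈ R \ W₀, a i ≤ μ * C := by
            rw [hsumsd]; simp only [hx'def]; linarith
          have hled' : x' + ∑ i ∈ R \ W₀, (a i - C) ≤ 0 ∨ ∀ i ∈ R \ W₀, a i ≤ C :=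
            Or.inr fun i hi => by
              have := hB i (Finset.mem_sdiff.1 hi).1; linarith
          have hrec := ih (R \ W₀) x' hx'0 hx'C hcap' hled'
          refine pack_glue a C hpos μ R W₀ ((C - x)/∑ i ∈ W₀, a i) x x' hW₀R ?_ ?_ ?_ ?_ hx'0 hcap' hrec
          · exact div_nonneg (by linarith) hWpos.le
          · rw [div_le_one hWpos]; linarith
          · rw [div_mul_cancel₀ _ (ne_of_gt hWpos)]; linarith
          · field_simp
            ring

/-- Balanced Multistage Bin Packing feasibility: for objects `a 0 ≥ ... ≥ a (n-1) > 0`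
with sum `S`, capacity `C > 0` with `a 0 - a (n-1) ≤ C`, and `m = ⌈S/C⌉ ≤ n` bins, there
is an assignment of fractions `λ i j ∈ [0,1]` with: each object fully assigned, each
object split across at most 2 bins, no bin exceeding `C`, and within each bin the nonzero
fractions taking at most 2 distinct values (one per stage). -/
theorem balanced_two_stage_packing (n m : ℕ) (hn : 0 < n)
    (a : Fin n → ℝ) (ha_pos : ∀ i, 0 < a i) (ha_sorted : Antitone a)
    (C : ℝ) (hC : 0 < C)
    (hgap : a ⟨0, hn⟩ - a ⟨n - 1, Nat.sub_lt hn Nat.one_pos⟩ ≤ C)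
    (hm : m = ⌈(∑ i, a i) / C⌉₊) (hmn : m ≤ n) :
    ∃ lam : Fin n → Fin m → ℝ,
      (∀ i j, lam i j ∈ Set.Icc (0 : ℝ) 1) ∧
      (∀ i, ∑ j, lam i j = 1) ∧
      (∀ i, ∃ s : Finset (Fin m), s.card ≤ 2 ∧ ∀ j ∉ s, lam i j = 0) ∧
      (∀ j, ∑ i, a i * lam i j ≤ C) ∧
      (∃ α β : Fin m → ℝ, ∀ i j, lam i j = 0 ∨ lam i j = α j ∨ lam i j = β j) := by
  classical
  set S := ∑ i, a i with hS
  have hSpos : 0 < S := Finset.sum_pos (fun i _ => ha_pos i) ⟨⟨0, hn⟩, Finset.mem_univ _⟩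
  have hSC : S ≤ (m : ℝ) * C := by
    have h1 : S / C ≤ (m : ℝ) := by
      rw [hm]; exact Nat.le_ceil _
    calc S = S / C * C := by field_simp
    _ ≤ (m : ℝ) * C := by
      exact mul_le_mul_of_nonneg_right h1 hC.le
  have hSn : S ≤ (n : ℝ) * C := by
    have : (m : ℝ) ≤ (n : ℝ) := Nat.cast_le.2 hmn
    nlinarith
  set δ := a ⟨n - 1, Nat.sub_lt hn Nat.one_pos⟩ with hδ
  have hlb : ∀ i, δ ≤ a i := by
    intro i
    apply ha_sorted
    rw [Fin.le_def]
    simp only []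
    omega
  have hub : ∀ i, a i ≤ C + δ := by
    intro i
    have h0 : a i ≤ a ⟨0, hn⟩ := by
      apply ha_sorted
      rw [Fin.le_def]
      simp
    linarith
  have hled : (0:ℝ) + ∑ i ∈ Finset.univ, (a i - C) ≤ 0 ∨ ∀ i ∈ (Finset.univ : Finset (Fin n)), a i ≤ C := by
    left
    rw [Finset.sum_sub_distrib, Finset.sum_const, Finset.card_univ, Fintype.card_fin,
      nsmul_eq_mul]
    simp only [zero_add]
    linarith
  have hcap : (0:ℝ) + ∑ i ∈ Finset.univ, a i ≤ (m : ℝ) * C := by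
    simpa using hSC
  obtain ⟨W, u, hdisj, hsubR, hcov, hu, hWm, hnospill, hload0, hloads⟩ :=
    pack_core a C δ hC ha_pos hlb hub m Finset.univ 0 le_rfl hC.le hcap hled
  have hm1 : 0 < m := by
    rw [hm]
    rw [Nat.ceil_pos]
    positivity
  -- uniqueness of blocks
  have huniq : ∀ i j k, i ∈ W j → i ∈ W k → j = k := by
    intro i j k hj hk
    by_contra hne
    exact Finset.disjoint_left.1 (hdisj j k hne) hj hk
  -- block index of each object
  have hJ : ∀ i, ∃ j, i ∈ W j ∧ j < m := by
    intro i
    obtain ⟨j, hj⟩ := hcov i (Finset.mem_univ i)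
    refine ⟨j, hj, ?_⟩
    by_contra hge
    push_neg at hge
    rw [hWm j hge] at hj
    exact absurd hj (Finset.notMem_empty i)
  set J : Fin n → ℕ := fun i => (hJ i).choose with hJdef
  have hJmem : ∀ i, i ∈ W (J i) := fun i => (hJ i).choose_spec.1
  have hJlt : ∀ i, J i < m := fun i => (hJ i).choose_spec.2
  set lam : Fin n → Fin m → ℝ := fun i j =>
    (if i ∈ W j.1 then u j.1 else 0) +
    (if 0 < j.1 ∧ i ∈ W (j.1 - 1) then 1 - u (j.1 - 1) else 0) with hlam
  have hnotboth : ∀ (i : Fin n) (j : Fin m), i ∈ W j.1 → ¬(0 < j.1 ∧ i ∈ W (j.1 - 1)) := by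
    rintro i j h1 ⟨hpos', h2⟩
    have := huniq i j.1 (j.1 - 1) h1 h2
    omega
  -- positive sums over blocks containing an element
  have hblockpos : ∀ (i : Fin n) (j : ℕ), i ∈ W j → 0 < ∑ k ∈ W j, a k := by
    intro i j hij
    exact Finset.sum_pos (fun k _ => ha_pos k) ⟨i, hij⟩
  have hulast : ∀ i, m ≤ J i + 1 → u (J i) = 1 := by
    intro i hmi
    have h0 := hnospill (J i) hmi
    have hpos' := hblockpos i (J i) (hJmem i)
    rcases mul_eq_zero.1 h0 with h | h
    · linarith
    · linarith
  refine ⟨lam, ?_, ?_, ?_, ?_, ?_⟩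
  · -- bounds
    intro i j
    constructor
    · apply add_nonneg
      · split_ifs with h
        · exact (hu j.1).1
        · exact le_rfl
      · split_ifs with h
        · linarith [(hu (j.1-1)).2]
        · exact le_rfl
    · by_cases h1 : i ∈ W j.1
      · have h2 : ¬(0 < j.1 ∧ i ∈ W (j.1 - 1)) := hnotboth i j h1
        simp only [hlam, if_pos h1, if_neg h2, add_zero]
        exact (hu j.1).2
      · simp only [hlam, if_neg h1, zero_add]
        split_ifs with h2
        · linarith [(hu (j.1-1)).1]
        · exact zero_le_one
  · -- sums to one
    intro i
    have hsplit : ∑ j : Fin m, lam i j =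
        (∑ j : Fin m, if i ∈ W j.1 then u j.1 else 0) +
        (∑ j : Fin m, if 0 < j.1 ∧ i ∈ W (j.1 - 1) then 1 - u (j.1 - 1) else 0) := by
      rw [← Finset.sum_add_distrib]
    rw [hsplit]
    have hfirst : (∑ j : Fin m, if i ∈ W j.1 then u j.1 else 0) = u (J i) := by
      rw [Finset.sum_eq_single (⟨J i, hJlt i⟩ : Fin m)]
      · simp [hJmem i]
      · intro b _ hb
        split_ifs with h
        · exact absurd (Fin.ext (huniq i b.1 (J i) h (hJmem i))) hb
        · rfl
      · intro h; exact absurd (Finset.mem_univ _) h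
    rw [hfirst]
    by_cases hc : J i + 1 < m
    · have hsecond : (∑ j : Fin m, if 0 < j.1 ∧ i ∈ W (j.1 - 1) then 1 - u (j.1 - 1) else 0)
          = 1 - u (J i) := by
        rw [Finset.sum_eq_single (⟨J i + 1, hc⟩ : Fin m)]
        · simp [hJmem i]
        · intro b _ hb
          split_ifs with h
          · obtain ⟨hb0, hbW⟩ := h
            have := huniq i (b.1 - 1) (J i) hbW (hJmem i)
            exact absurd (Fin.ext (by simp only [Fin.val_mk]; omega)) hb
          · rfl
        · intro h; exact absurd (Finset.mem_univ _) h
      rw [hsecond]; ring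
    · push_neg at hc
      have hsecond : (∑ j : Fin m, if 0 < j.1 ∧ i ∈ W (j.1 - 1) then 1 - u (j.1 - 1) else 0)
          = 0 := by
        apply Finset.sum_eq_zero
        intro b _
        split_ifs with h
        · obtain ⟨hb0, hbW⟩ := h
          have := huniq i (b.1 - 1) (J i) hbW (hJmem i)
          have := b.isLt
          omega
        · rfl
      rw [hsecond, hulast i hc]; ring
  · -- at most two bins
    intro i
    by_cases hc : J i + 1 < m
    · refine ⟨{⟨J i, hJlt i⟩, ⟨J i + 1, hc⟩}, ?_, ?_⟩
      · exact Finset.card_insert_le _ _ |>.trans (by simp)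
      · intro j hj
        simp only [Finset.mem_insert, Finset.mem_singleton] at hj
        push_neg at hj
        obtain ⟨hj1, hj2⟩ := hj
        simp only [hlam]
        rw [if_neg, if_neg]
        · ring
        · rintro ⟨h0, hW2⟩
          have := huniq i (j.1 - 1) (J i) hW2 (hJmem i)
          exact hj2 (Fin.ext (by simp only [Fin.val_mk]; omega))
        · intro hW1
          exact hj1 (Fin.ext (huniq i j.1 (J i) hW1 (hJmem i)))
    · push_neg at hc
      refine ⟨{⟨J i, hJlt i⟩}, by simp, ?_⟩
      intro j hj
      simp only [Finset.mem_singleton] at hj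
      simp only [hlam]
      rw [if_neg, if_neg]
      · ring
      · rintro ⟨h0, hW2⟩
        have := huniq i (j.1 - 1) (J i) hW2 (hJmem i)
        have := j.isLt
        omega
      · intro hW1
        exact hj (Fin.ext (huniq i j.1 (J i) hW1 (hJmem i)))
  · -- bin loads
    intro j
    have hsplit : ∑ i, a i * lam i j =
        (∑ i, if i ∈ W j.1 then a i * u j.1 else 0) +
        (∑ i, if 0 < j.1 ∧ i ∈ W (j.1 - 1) then a i * (1 - u (j.1 - 1)) else 0) := by
      rw [← Finset.sum_add_distrib]
      apply Finset.sum_congr rfl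
      intro i _
      simp only [hlam, mul_add, mul_ite, mul_zero]
    rw [hsplit]
    have h1 : (∑ i, if i ∈ W j.1 then a i * u j.1 else 0)
        = u j.1 * ∑ i ∈ W j.1, a i := by
      rw [Finset.sum_ite_mem, Finset.univ_inter, ← Finset.sum_mul, mul_comm]
    rcases j with ⟨jv, hjv⟩
    rcases jv with _ | k
    · have h2 : (∑ i, if 0 < (0:ℕ) ∧ i ∈ W (0 - 1) then a i * (1 - u (0 - 1)) else 0) = 0 := by
        apply Finset.sum_eq_zero; intro i _; simp
      simp only [] at h1 h2 ⊢
      rw [h1, h2, add_zero]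
      have := hload0 hm1
      linarith
    · have h2 : (∑ i, if 0 < (k+1:ℕ) ∧ i ∈ W (k + 1 - 1) then a i * (1 - u (k + 1 - 1)) else 0)
          = (1 - u k) * ∑ i ∈ W k, a i := by
        simp only [Nat.add_sub_cancel, Nat.succ_pos, true_and]
        rw [Finset.sum_ite_mem, Finset.univ_inter, ← Finset.sum_mul, mul_comm]
      simp only [] at h1 h2 ⊢
      rw [h1, h2]
      have := hloads k hjv
      linarith
  · -- two values per bin
    refine ⟨fun j => u j.1, fun j => 1 - u (j.1 - 1), ?_⟩
    intro i j
    by_cases h1 : i ∈ W j.1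
    · have h2 : ¬(0 < j.1 ∧ i ∈ W (j.1 - 1)) := hnotboth i j h1
      right; left
      simp [hlam, if_pos h1, if_neg h2]
    · by_cases h2 : 0 < j.1 ∧ i ∈ W (j.1 - 1)
      · right; right
        simp [hlam, if_neg h1, if_pos h2]
      · left
        simp [hlam, if_neg h1, if_neg h2]
end

section
/- Let a_1 ≥ ... ≥ a_n > 0 with sum S and let m ≤ n. If a_1 - a_n ≤ S/m, then there exists an allocation of the objects to m bins, each object split across at most 2 bins with fraction values depending only on (bin, stage), such that every bin receives total size exactly S/m. -/
/-!
Stage one is the greedy rule: after placing the `m` largest objects one per bin, put each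
remaining object into a least loaded bin. The first `m` loads differ by at most
`a₀ - aₙ₋₁ ≤ S/m`, and every later object has size at most `S/m` (it is dominated by the `m`
objects before it), so the final loads `F b` pairwise differ by at most `c = S/m`.

Stage two arranges the bins on a cycle and lets bin `j` keep the fraction `t j` of its objects,
passing the rest to its predecessor. Bin `j` then receives `w j + F (j+1) - w (j+1)` with
`w = t F`, so balance means that `w` is a potential for the deviations `F - c` along the cycle,
and `0 ≤ w ≤ F` is needed. Ordering the bins so that every partial sum of the deviations lies in
`[min F - c, max F - c]` (always add next a deviation of sign opposite to the current partial sum)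
and taking `w` = partial sum minus its minimum gives `0 ≤ w ≤ max F - min F + F - c ≤ F`.
-/

open Finset

section Loads

variable {ι β : Type*} [DecidableEq β]

def binLoad (s : Finset ι) (x : ι → ℝ) (g : ι → β) (b : β) : ℝ :=
  ∑ i ∈ s with g i = b, x i

def LoadSpreadLE (s : Finset ι) (x : ι → ℝ) (g : ι → β) (c : ℝ) : Prop :=
  ∀ b b', binLoad s x g b ≤ binLoad s x g b' + c

theorem sum_binLoad [Fintype β] (s : Finset ι) (x : ι → ℝ) (g : ι → β) :
    ∑ b, binLoad s x g b = ∑ i ∈ s, x i :=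
  sum_fiberwise s g x

theorem binLoad_equiv_comp {γ : Type*} [DecidableEq γ] (s : Finset ι) (x : ι → ℝ) (g : ι → β)
    (e : β ≃ γ) (b : γ) : binLoad s x (e ∘ g) b = binLoad s x g (e.symm b) := by
  simp only [binLoad, Function.comp_apply, ← Equiv.eq_symm_apply]

theorem binLoad_map_of_leftInverse [Fintype β] (φ : β ↪ ι) {g : ι → β}
    (hg : Function.LeftInverse g φ) (x : ι → ℝ) (b : β) :
    binLoad (univ.map φ) x g b = x (φ b) := by
  simp [binLoad, filter_map, hg _, filter_eq']

theorem binLoad_insert_update [DecidableEq ι] {s : Finset ι} {j : ι} (hj : j ∉ s) (x : ι → ℝ)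
    (g : ι → β) (b₀ b : β) :
    binLoad (insert j s) x (Function.update g j b₀) b =
      binLoad s x g b + if b₀ = b then x j else 0 := by
  have hs : {i ∈ s | Function.update g j b₀ i = b} = {i ∈ s | g i = b} :=
    filter_congr fun i hi => by rw [Function.update_of_ne (ne_of_mem_of_not_mem hi hj)]
  rw [binLoad, filter_insert, Function.update_self]
  split_ifs
  · rw [sum_insert (by simp [hj]), hs, add_comm, binLoad]
  · rw [hs, add_zero, binLoad]

-- The new object goes to a least loaded bin.
theorem LoadSpreadLE.exists_insert [Finite β] [Nonempty β] [DecidableEq ι] {s : Finset ι}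
    {x : ι → ℝ} {g : ι → β} {c : ℝ} (hg : LoadSpreadLE s x g c) {j : ι} (hj : j ∉ s)
    (hxj : x j ∈ Set.Icc 0 c) : ∃ b₀, LoadSpreadLE (insert j s) x (Function.update g j b₀) c := by
  obtain ⟨b₀, hb₀⟩ := Finite.exists_min (binLoad s x g)
  refine ⟨b₀, fun b b' => ?_⟩
  have := hg b b'
  have := hb₀ b
  have := hb₀ b'
  simp only [binLoad_insert_update hj]
  split_ifs <;> subst_vars <;> linarith [hxj.1, hxj.2]

theorem LoadSpreadLE.exists_union [Finite β] [Nonempty β] [DecidableEq ι] {t : Finset ι}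
    {x : ι → ℝ} {g : ι → β} {c : ℝ} (hg : LoadSpreadLE t x g c) (s : Finset ι)
    (hts : Disjoint t s) (hs : ∀ i ∈ s, x i ∈ Set.Icc 0 c) :
    ∃ g' : ι → β, LoadSpreadLE (t ∪ s) x g' c := by
  induction s using Finset.induction_on with
  | empty => exact ⟨g, by simpa using hg⟩
  | insert j s hj ih =>
    obtain ⟨g', hg'⟩ := ih (disjoint_of_subset_right (subset_insert _ _) hts)
      fun i hi => hs i (mem_insert_of_mem hi)
    have hjt : j ∉ t := disjoint_right.mp hts (mem_insert_self _ _)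
    rw [union_insert]
    obtain ⟨b₀, hb₀⟩ := hg'.exists_insert (by simp [hj, hjt]) (hs j (mem_insert_self _ _))
    exact ⟨_, hb₀⟩

end Loads

theorem exists_loadSpreadLE_of_antitone {n m : ℕ} (hn : 0 < n) (hm : 0 < m) (hmn : m ≤ n)
    (a : Fin n → ℝ) (ha : ∀ i, 0 ≤ a i) (ha_sorted : Antitone a)
    (hgap : a ⟨0, hn⟩ - a ⟨n - 1, Nat.sub_lt hn Nat.one_pos⟩ ≤ (∑ i, a i) / m) :
    ∃ g : Fin n → Fin m, LoadSpreadLE univ a g ((∑ i, a i) / m) := by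
  classical
  have : Nonempty (Fin m) := ⟨⟨0, hm⟩⟩
  set c := (∑ i, a i) / m
  let φ := Fin.castLEEmb hmn
  let g₀ : Fin n → Fin m := fun i => ⟨i % m, Nat.mod_lt _ hm⟩
  have hφ : Function.LeftInverse g₀ φ := fun b => Fin.ext (Nat.mod_eq_of_lt b.isLt)
  have hfirst : LoadSpreadLE (univ.map φ) a g₀ c := fun b b' => by
    rw [binLoad_map_of_leftInverse φ hφ, binLoad_map_of_leftInverse φ hφ]
    have h0 := ha_sorted (show (⟨0, hn⟩ : Fin n) ≤ φ b from Nat.zero_le _)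
    have hlast := ha_sorted (show φ b' ≤ ⟨n - 1, Nat.sub_lt hn Nat.one_pos⟩ from by
      simp only [Fin.le_def, φ, Fin.castLEEmb_apply, Fin.val_castLE]; omega)
    linarith
  have hrest : ∀ i ∈ (univ.map φ)ᶜ, a i ∈ Set.Icc 0 c := by
    intro i hi
    have hmi : m ≤ i := by
      by_contra! h
      exact (mem_compl.mp hi) (mem_map.mpr ⟨⟨i, h⟩, mem_univ _, rfl⟩)
    refine ⟨ha i, (le_div_iff₀ (by exact_mod_cast hm)).mpr ?_⟩
    calc a i * m = ∑ _b : Fin m, a i := by simp [mul_comm]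
      _ ≤ ∑ b, a (φ b) := sum_le_sum fun b _ => ha_sorted (show φ b ≤ i from by
          simp only [Fin.le_def, φ, Fin.castLEEmb_apply, Fin.val_castLE]; omega)
      _ = ∑ i ∈ univ.map φ, a i := (sum_map _ _ _).symm
      _ ≤ ∑ i, a i := sum_le_sum_of_subset_of_nonneg (subset_univ _) fun i _ _ => ha i
  obtain ⟨g, hg⟩ := hfirst.exists_union _ disjoint_compl_right hrest
  exact ⟨g, by rwa [union_compl] at hg⟩

theorem List.exists_perm_sum_take_mem_Icc {α : Type*} (d : α → ℝ) {u v : ℝ} (l : List α)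
    (hd : ∀ x ∈ l, d x ∈ Set.Icc (-u) v) (P : ℝ) (hP : P ∈ Set.Icc (-u) v)
    (hsum : P + (l.map d).sum = 0) :
    ∃ l', l.Perm l' ∧ ∀ k, P + ((l'.map d).take k).sum ∈ Set.Icc (-u) v := by
  classical
  rcases eq_or_ne l [] with rfl | hl
  · exact ⟨[], .nil, fun _ => by simpa using hP⟩
  obtain ⟨x, hx, hPx⟩ : ∃ x ∈ l, P + d x ∈ Set.Icc (-u) v := by
    rcases le_or_gt 0 P with hP0 | hP0
    · obtain ⟨x, hx, hdx⟩ := List.exists_le_of_sum_le hl d (fun _ => 0) (by simp; linarith)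
      exact ⟨x, hx, by linarith [(hd x hx).1], by linarith [hP.2]⟩
    · obtain ⟨x, hx, hdx⟩ := List.exists_lt_of_sum_lt (fun _ => 0) d (by simp; linarith)
      exact ⟨x, hx, by linarith [hP.1], by linarith [(hd x hx).2]⟩
  have hperm := List.perm_cons_erase hx
  have hsum' : P + d x + ((l.erase x).map d).sum = 0 := by
    rw [← hsum, (hperm.map d).sum_eq, List.map_cons, List.sum_cons, add_assoc]
  obtain ⟨l', hl', hpre⟩ := exists_perm_sum_take_mem_Icc d (l.erase x)
    (fun y hy => hd y (List.erase_subset hy)) (P + d x) hPx hsum'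
  refine ⟨x :: l', hperm.trans (hl'.cons x), fun k => ?_⟩
  cases k with
  | zero => simpa using hP
  | succ k => simpa [add_assoc] using hpre k
termination_by l.length
decreasing_by classical rw [List.length_erase_of_mem hx]; exact Nat.pred_lt (by simpa using hl)

theorem exists_cyclic_potential {m : ℕ} {u v : ℝ} (D : Fin (m + 1) → ℝ) (Q : ℕ → ℝ)
    (hQ0 : Q 0 = 0) (hQm : Q (m + 1) = 0) (hstep : ∀ k : Fin (m + 1), Q (k + 1) = Q k + D k)
    (hQ : ∀ k, Q k ∈ Set.Icc (-u) v) :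
    ∃ w : Fin (m + 1) → ℝ,
      (∀ k, w k ∈ Set.Icc 0 (u + v + D k)) ∧ ∀ k, w (k + 1) = w k + D (k + 1) := by
  obtain ⟨k₀, hk₀⟩ := Finite.exists_min fun k : Fin (m + 1) => Q (k + 1)
  refine ⟨fun k => Q (k + 1) - Q (k₀ + 1), fun k => ⟨by linarith [hk₀ k], ?_⟩, fun k => ?_⟩
  · linarith [hstep k, (hQ k).2, (hQ (k₀ + 1)).1]
  · rcases (Fin.le_last k).eq_or_lt with rfl | hk
    · have h1 := hstep 0
      simp only [Fin.val_zero, zero_add, hQ0] at h1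
      simp [hQm, h1, neg_add_eq_sub]
    · have h2 := hstep (k + 1)
      rw [Fin.val_add_one_of_lt hk] at h2
      simp only [Fin.val_add_one_of_lt hk, h2]
      ring

theorem exists_cyclic_order {m : ℕ} (F : Fin (m + 1) → ℝ) (c : ℝ)
    (hsum : ∑ b, F b = (m + 1) * c) (hF : ∀ b b', F b ≤ F b' + c) :
    ∃ (e : Fin (m + 1) ≃ Fin (m + 1)) (t : Fin (m + 1) → ℝ), (∀ k, t k ∈ Set.Icc 0 1) ∧
      ∀ k, t k * F (e k) + (1 - t (k + 1)) * F (e (k + 1)) = c := by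
  obtain ⟨b₀, -, hb₀⟩ := exists_min_image univ F univ_nonempty
  obtain ⟨b₁, -, hb₁⟩ := exists_max_image univ F univ_nonempty
  have hsum_const : ∑ b, F b = ∑ _b : Fin (m + 1), c := by simp [hsum]
  obtain ⟨b₂, -, hb₂⟩ := exists_le_of_sum_le univ_nonempty hsum_const.le
  obtain ⟨b₃, -, hb₃⟩ := exists_le_of_sum_le univ_nonempty hsum_const.ge
  set d : Fin (m + 1) → ℝ := fun b => F b - c
  have hd_sum : ((List.finRange (m + 1)).map d).sum = 0 := by
    simp [d, ← Fin.sum_univ_def, hsum]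
  obtain ⟨l, hl, hpre⟩ := List.exists_perm_sum_take_mem_Icc d (List.finRange (m + 1))
    (u := c - F b₀) (v := F b₁ - c)
    (fun b _ => ⟨by linarith [hb₀ b (mem_univ _)], by linarith [hb₁ b (mem_univ _)]⟩) 0
    ⟨by linarith [hb₀ b₂ (mem_univ _)], by linarith [hb₁ b₃ (mem_univ _)]⟩
    (by rw [zero_add, hd_sum])
  have hlen : l.length = m + 1 := by simp [← hl.length_eq]
  let e : Fin (m + 1) ≃ Fin (m + 1) := (finCongr hlen.symm).trans
    ((hl.nodup_iff.mp (List.nodup_finRange _)).getEquivOfForallMemList l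
      fun b => hl.mem_iff.mp (List.mem_finRange b))
  obtain ⟨w, hw, hw_succ⟩ := exists_cyclic_potential (u := c - F b₀) (v := F b₁ - c)
    (fun k => d (e k)) (fun k => ((l.map d).take k).sum) (by simp)
    (by rw [List.take_of_length_le (by simp [hlen]), ← (hl.map d).sum_eq, hd_sum])
    (fun k => by
      rw [List.sum_take_succ _ _ (by rw [List.length_map, hlen]; exact k.isLt)]
      simp [e, d])
    (fun k => by simpa only [zero_add] using hpre k)
  have hwF : ∀ k, w k ∈ Set.Icc 0 (F (e k)) := fun k =>
    ⟨(hw k).1, by linarith [(hw k).2, hF b₁ b₀]⟩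
  refine ⟨e, fun k => w k / F (e k), fun k => ⟨div_nonneg (hwF k).1 ((hwF k).1.trans (hwF k).2),
    div_le_one_of_le₀ (hwF k).2 ((hwF k).1.trans (hwF k).2)⟩, fun k => ?_⟩
  have hmul : ∀ k, w k / F (e k) * F (e k) = w k := fun k =>
    div_mul_cancel_of_imp fun h => le_antisymm (h ▸ (hwF k).2) (hwF k).1
  rw [sub_mul, one_mul, hmul, hmul, hw_succ]
  ring

def IsTwoStageAllocation {ι : Type*} [Fintype ι] {m : ℕ} (x : ι → ℝ) (c : ℝ)
    (lam : ι → Fin m → ℝ) : Prop :=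
  (∀ i j, lam i j ∈ Set.Icc (0 : ℝ) 1) ∧
  (∀ i, ∑ j, lam i j = 1) ∧
  (∀ i, ∃ s : Finset (Fin m), s.card ≤ 2 ∧ ∀ j ∉ s, lam i j = 0) ∧
  (∀ j, ∑ i, x i * lam i j = c) ∧
  (∃ α : Fin m → Fin 2 → ℝ, ∀ i j, lam i j = 0 ∨ lam i j = α j 0 ∨ lam i j = α j 1)

section TwoStage

variable {ι : Type*} [Fintype ι]

theorem exists_isTwoStageAllocation_fin_one (x : ι → ℝ) {c : ℝ} (hc : ∑ i, x i = c) :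
    ∃ lam : ι → Fin 1 → ℝ, IsTwoStageAllocation x c lam :=
  ⟨fun _ _ => 1, fun _ _ => ⟨zero_le_one, le_rfl⟩, fun _ => by simp,
    fun _ => ⟨univ, by simp, by simp⟩, fun _ => by simp [hc], ⟨fun _ _ => 1, fun _ _ => by simp⟩⟩

-- Bin `j` keeps the fraction `t j` of its own objects and takes `1 - t (j + 1)` of its successor's.
theorem exists_isTwoStageAllocation_of_transfer {m : ℕ} (hm : m ≠ 0) (x : ι → ℝ) (c : ℝ)
    (p : ι → Fin (m + 1)) (t : Fin (m + 1) → ℝ) (ht : ∀ k, t k ∈ Set.Icc 0 1)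
    (htransfer : ∀ k, t k * binLoad univ x p k + (1 - t (k + 1)) * binLoad univ x p (k + 1) = c) :
    ∃ lam : ι → Fin (m + 1) → ℝ, IsTwoStageAllocation x c lam := by
  have hne : ∀ i j, p i = j → p i ≠ j + 1 := fun i j h h' => by
    rw [h, left_eq_add, Fin.one_eq_zero_iff] at h'
    omega
  refine ⟨fun i j => (if p i = j then t j else 0) + (if p i = j + 1 then 1 - t (j + 1) else 0),
    fun i j => ?_, fun i => ?_, fun i => ⟨{p i, p i - 1}, card_le_two, fun j hj => ?_⟩, fun j => ?_,
    ⟨fun j s => if s = 0 then t j else 1 - t (j + 1), fun i j => ?_⟩⟩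
  · obtain ⟨htj₀, htj₁⟩ := ht j
    obtain ⟨hts₀, hts₁⟩ := ht (j + 1)
    beta_reduce
    split_ifs with h h' <;> first | exact absurd h' (hne i j h) | constructor <;> linarith
  · simp [sum_add_distrib, ← sub_eq_iff_eq_add]
  · simp only [mem_insert, mem_singleton, not_or] at hj
    beta_reduce
    rw [if_neg (Ne.symm hj.1), if_neg fun h => hj.2 (eq_sub_of_add_eq h.symm), add_zero]
  · rw [← htransfer j]
    simp only [binLoad, sum_filter, mul_sum, mul_add, mul_ite, mul_zero, ite_mul, zero_mul,
      sum_add_distrib, mul_comm]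
  · beta_reduce
    split_ifs with h h' <;> simp_all

end TwoStage

/-- For objects `a 0 ≥ ... ≥ a (n-1) > 0` with sum `S` and `m ≤ n` bins, if
`a 0 - a (n-1) ≤ S/m` then the objects can be allocated to the `m` bins, each object
split across at most 2 bins, with fraction values depending only on (bin, stage), such
that every bin receives total size exactly `S/m`. -/
theorem balanced_two_stage_exact (n m : ℕ) (hn : 0 < n) (hm : 0 < m) (hmn : m ≤ n)
    (a : Fin n → ℝ) (ha_pos : ∀ i, 0 < a i) (ha_sorted : Antitone a)
    (hgap : a ⟨0, hn⟩ - a ⟨n - 1, Nat.sub_lt hn Nat.one_pos⟩ ≤ (∑ i, a i) / m) :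
    ∃ lam : Fin n → Fin m → ℝ,
      (∀ i j, lam i j ∈ Set.Icc (0 : ℝ) 1) ∧
      (∀ i, ∑ j, lam i j = 1) ∧
      (∀ i, ∃ s : Finset (Fin m), s.card ≤ 2 ∧ ∀ j ∉ s, lam i j = 0) ∧
      (∀ j, ∑ i, a i * lam i j = (∑ i, a i) / m) ∧
      (∃ α : Fin m → Fin 2 → ℝ, ∀ i j, lam i j = 0 ∨ lam i j = α j 0 ∨ lam i j = α j 1) := by
  obtain ⟨g, hg⟩ :=
    exists_loadSpreadLE_of_antitone hn hm hmn a (fun i => (ha_pos i).le) ha_sorted hgap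
  obtain ⟨k, rfl⟩ : ∃ k, m = k + 1 := ⟨m - 1, by omega⟩
  rcases eq_or_ne k 0 with rfl | hk
  · exact exists_isTwoStageAllocation_fin_one a (by simp)
  have hsum : ∑ b, binLoad univ a g b = (k + 1) * ((∑ i, a i) / ↑(k + 1)) := by
    rw [sum_binLoad]
    push_cast
    field_simp
  obtain ⟨e, t, ht, htransfer⟩ := exists_cyclic_order _ _ hsum hg
  refine exists_isTwoStageAllocation_of_transfer hk a _ (e.symm ∘ g) t ht fun j => ?_
  simpa only [binLoad_equiv_comp, Equiv.symm_symm] using htransfer j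
end

section
/- Let A be a multiset of positive integers with even sum S, max A ≤ S/2, r = S mod 3, A' = A ∪ {S/2+4−r, S/2+4−r}, and C = 2(S+4−r)/3. If A can be partitioned into two subsets A_1, A_2 each of sum S/2, then A' admits a balanced fractional packing into 3 bins of capacity C with proportionality factors 2/3, 2/3, 1/3, where each object is split across exactly 2 bins: bin 1 holds 2/3 of each element of A_1 ∪ {S/2+4−r}, bin 2 holds 2/3 of each element of A_2 ∪ {S/2+4−r}, and bin 3 holds 1/3 of every element of A'. -/
/-!
With `m = S/2 + 4 - r`, list the elements of `A₁ + {m}` followed by those of `A₂ + {m}`;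
rows of the first block get the weights `(2/3, 0, 1/3)` and rows of the second
`(0, 2/3, 1/3)`. Each block sums to `S/2 + m = S + 4 - r` (as `r < 3`, the subtraction does
not truncate), so bins 1 and 2 receive `2/3` of one block and bin 3 receives `1/3` of both:
exactly `C = 2(S + 4 - r)/3` in every bin.
-/

open Finset

theorem Finset.map_val_eq_sum_singleton {ι α : Type*} (s : Finset ι) (f : ι → α) :
    s.val.map f = ∑ i ∈ s, {f i} := by
  rw [Finset.sum_eq_multiset_sum, ← Multiset.sum_map_singleton (s.val.map f), Multiset.map_map]
  rfl

theorem Fin.map_append_filter_val {α : Type*} {m n : ℕ} (f₁ : Fin m → α) (f₂ : Fin n → α)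
    (q : Fin (m + n) → Prop) [DecidablePred q] :
    (univ.filter q).val.map (Fin.append f₁ f₂) =
      (univ.filter (q ∘ Fin.castAdd n)).val.map f₁ +
        (univ.filter (q ∘ Fin.natAdd m)).val.map f₂ := by
  simp only [Finset.map_val_eq_sum_singleton, Finset.sum_filter, Fin.sum_univ_add,
    Fin.append_left, Fin.append_right, Function.comp_apply]

theorem Multiset.exists_ofFn_eq {α : Type*} (B : Multiset α) :
    ∃ (n : ℕ) (f : Fin n → α), (↑(List.ofFn f) : Multiset α) = B :=
  ⟨_, B.toList.get, by rw [List.ofFn_get, Multiset.coe_toList]⟩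

theorem Fin.append_const_eq_or {α : Type*} {m n : ℕ} (x y : α) (i : Fin (m + n)) :
    Fin.append (fun _ : Fin m => x) (fun _ : Fin n => y) i = x ∨
      Fin.append (fun _ : Fin m => x) (fun _ : Fin n => y) i = y :=
  Fin.addCases (fun _ => by simp) (fun _ => by simp) i

theorem Fin.sum_append_mul_append_const {β : Type*} {m n : ℕ}
    (f₁ : Fin m → ℕ) (f₂ : Fin n → ℕ) (w₁ w₂ : β → ℝ) (j : β) :
    ∑ i, ((Fin.append f₁ f₂ i : ℕ) : ℝ) *
        Fin.append (fun _ : Fin m => w₁) (fun _ : Fin n => w₂) i j =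
      ((List.ofFn f₁).sum : ℝ) * w₁ j + ((List.ofFn f₂).sum : ℝ) * w₂ j := by
  simp [Fin.sum_univ_add, List.sum_ofFn, Finset.sum_mul]

theorem partition_implies_balanced_packing_general
    (A : Multiset ℕ) (S : ℕ)
    (r : ℕ) (hr : r = S % 3)
    (A' : Multiset ℕ) (hA' : A' = A + {S / 2 + 4 - r, S / 2 + 4 - r})
    (Cap : ℝ) (hCap : Cap = 2 * ((S : ℝ) + 4 - (r : ℝ)) / 3)
    (A₁ A₂ : Multiset ℕ) (hpart : A = A₁ + A₂)
    (h1 : 2 * A₁.sum = S) (h2 : 2 * A₂.sum = S) :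
    ∃ (N : ℕ) (a : Fin N → ℕ) (lam : Fin N → Fin 3 → ℝ),
      (↑(List.ofFn a) : Multiset ℕ) = A' ∧
      (∀ i j, lam i j = 0 ∨ lam i j = (if (j : ℕ) < 2 then (2 : ℝ) / 3 else 1 / 3)) ∧
      (∀ i, ∑ j, lam i j = 1) ∧
      (∀ i, lam i 2 = 1 / 3) ∧
      (∀ i, lam i 0 = 0 ∨ lam i 1 = 0) ∧
      (∀ j, ∑ i, (a i : ℝ) * lam i j = Cap) ∧
      Multiset.map a (Finset.univ.filter (fun i => lam i 0 ≠ 0)).val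
        = A₁ + {S / 2 + 4 - r} ∧
      Multiset.map a (Finset.univ.filter (fun i => lam i 1 ≠ 0)).val
        = A₂ + {S / 2 + 4 - r} := by
  set m := S / 2 + 4 - r
  obtain ⟨n₁, f₁, hf₁⟩ := (A₁ + {m}).exists_ofFn_eq
  obtain ⟨n₂, f₂, hf₂⟩ := (A₂ + {m}).exists_ofFn_eq
  have hr3 : r < 3 := hr ▸ Nat.mod_lt S three_pos
  have hs₁ : (List.ofFn f₁).sum = S + 4 - r := by
    rw [← Multiset.sum_coe, hf₁, Multiset.sum_add, Multiset.sum_singleton]; omega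
  have hs₂ : (List.ofFn f₂).sum = S + 4 - r := by
    rw [← Multiset.sum_coe, hf₂, Multiset.sum_add, Multiset.sum_singleton]; omega
  have hCap' : Cap = ((S + 4 - r : ℕ) : ℝ) * (2 / 3) := by
    rw [hCap, Nat.cast_sub (by omega)]; push_cast; ring
  refine ⟨n₁ + n₂, Fin.append f₁ f₂,
    Fin.append (fun _ => ![2 / 3, 0, 1 / 3]) (fun _ => ![0, 2 / 3, 1 / 3]),
    ?_, ?_, ?_, ?_, ?_, ?_, ?_, ?_⟩
  · rw [List.ofFn_fin_append, ← Multiset.coe_add, hf₁, hf₂, hA', hpart,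
      Multiset.insert_eq_cons, ← Multiset.singleton_add]
    abel
  · intro i j
    rcases Fin.append_const_eq_or _ _ i with h | h <;> rw [h] <;> fin_cases j <;> norm_num
  · intro i
    rcases Fin.append_const_eq_or _ _ i with h | h <;> rw [h] <;>
      simp [Fin.sum_univ_succ] <;> norm_num
  · intro i
    rcases Fin.append_const_eq_or _ _ i with h | h <;> rw [h] <;> rfl
  · intro i
    rcases Fin.append_const_eq_or _ _ i with h | h <;> rw [h] <;> simp
  · intro j
    rw [Fin.sum_append_mul_append_const, hs₁, hs₂, hCap']
    fin_cases j <;> norm_num; ring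
  · rw [Fin.map_append_filter_val, filter_true_of_mem fun i _ => by simp,
      filter_false_of_mem fun i _ => by simp, Fin.univ_val_map, hf₁]
    simp
  · rw [Fin.map_append_filter_val, filter_false_of_mem fun i _ => by simp,
      filter_true_of_mem fun i _ => by simp, Fin.univ_val_map, hf₂]
    simp

/-- Converse direction (k = 2): if `A` (positive integers, even sum `S`, `max A ≤ S/2`)
can be partitioned into `A₁, A₂` each of sum `S/2`, then `A' = A + {S/2+4-r, S/2+4-r}`
(`r = S % 3`) admits a balanced fractional packing into 3 bins of capacity
`2(S+4-r)/3` with factors `2/3, 2/3, 1/3`, where bin 1 holds `2/3` of each element of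
`A₁ ∪ {S/2+4-r}`, bin 2 holds `2/3` of each element of `A₂ ∪ {S/2+4-r}`, and bin 3 holds
`1/3` of every element of `A'`; in particular each bin is filled to exactly the capacity. -/
theorem partition_implies_balanced_packing
    (A : Multiset ℕ) (hpos : ∀ x ∈ A, 0 < x) (S : ℕ) (hS : S = A.sum)
    (heven : Even S) (hmaxA : ∀ x ∈ A, x ≤ S / 2)
    (r : ℕ) (hr : r = S % 3)
    (A' : Multiset ℕ) (hA' : A' = A + {S / 2 + 4 - r, S / 2 + 4 - r})
    (Cap : ℝ) (hCap : Cap = 2 * ((S : ℝ) + 4 - (r : ℝ)) / 3)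
    (A₁ A₂ : Multiset ℕ) (hpart : A = A₁ + A₂)
    (h1 : 2 * A₁.sum = S) (h2 : 2 * A₂.sum = S) :
    ∃ (N : ℕ) (a : Fin N → ℕ) (lam : Fin N → Fin 3 → ℝ),
      (↑(List.ofFn a) : Multiset ℕ) = A' ∧
      (∀ i j, lam i j = 0 ∨ lam i j = (if (j : ℕ) < 2 then (2 : ℝ) / 3 else 1 / 3)) ∧
      (∀ i, ∑ j, lam i j = 1) ∧
      (∀ i, lam i 2 = 1 / 3) ∧
      (∀ i, lam i 0 = 0 ∨ lam i 1 = 0) ∧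
      (∀ j, ∑ i, (a i : ℝ) * lam i j = Cap) ∧
      Multiset.map a (Finset.univ.filter (fun i => lam i 0 ≠ 0)).val
        = A₁ + {S / 2 + 4 - r} ∧
      Multiset.map a (Finset.univ.filter (fun i => lam i 1 ≠ 0)).val
        = A₂ + {S / 2 + 4 - r} :=
  partition_implies_balanced_packing_general A S r hr A' hA' Cap hCap A₁ A₂ hpart h1 h2
end

section
/- Let A' be a multiset of positive integers with total sum T, and suppose a balanced fractional packing of A' into 3 completely full bins of equal capacity T/3 exists where each object is split across at most 2 bins and T/3 ∉ ℤ. Then no bin has proportionality factor equal to 1, and the three proportionality factors are of the form α, α, 1−α for some α ∈ (0,1). -/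
open scoped Classical

lemma perm3a (x y : ℝ) : ({y, x, x} : Multiset ℝ) = {x, x, y} := by
  have h : ({y, x} : Multiset ℝ) = {x, y} := Multiset.pair_comm y x
  simp only [Multiset.insert_eq_cons] at *
  rw [Multiset.cons_swap, h]

lemma perm3b (x y : ℝ) : ({x, y, x} : Multiset ℝ) = {x, x, y} := by
  have h : ({y, x} : Multiset ℝ) = {x, y} := Multiset.pair_comm y x
  simp only [Multiset.insert_eq_cons] at *
  rw [h]

/-- If a multiset `A'` of positive integers with sum `T`, where `T/3 ∉ ℤ`, admits a
balanced fractional packing into 3 completely full bins of capacity `T/3`, each object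
split across at most 2 bins, then no proportionality factor equals 1 and the three
factors are of the form `α, α, 1-α` for some `α ∈ (0,1)`. -/
theorem three_bins_factors_shape
    (A' : Multiset ℕ) (hpos : ∀ x ∈ A', 0 < x) (T : ℕ) (hT : T = A'.sum)
    (hndvd : ¬ (3 ∣ T))
    (N : ℕ) (a : Fin N → ℕ) (ha : (↑(List.ofFn a) : Multiset ℕ) = A')
    (α : Fin 3 → ℝ) (lam : Fin N → Fin 3 → ℝ)
    (hα : ∀ j, 0 < α j ∧ α j ≤ 1)
    (hlam : ∀ i j, lam i j = 0 ∨ lam i j = α j)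
    (hsum1 : ∀ i, ∑ j, lam i j = 1)
    (hfull : ∀ j, ∑ i, (a i : ℝ) * lam i j = (T : ℝ) / 3)
    (hk2 : ∀ i, (Finset.univ.filter (fun j => lam i j ≠ 0)).card ≤ 2) :
    (∀ j, α j ≠ 1) ∧
    ∃ β ∈ Set.Ioo (0 : ℝ) 1, ({α 0, α 1, α 2} : Multiset ℝ) = {β, β, 1 - β} := by
  have hT3 : ((T : ℝ) / 3) ≠ 0 := by
    intro h
    have h1 : (T : ℝ) = 0 := by linarith [h]
    have h2 : T = 0 := by exact_mod_cast h1
    exact hndvd (h2 ▸ dvd_zero 3)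
  -- no factor equals 1
  have hne1 : ∀ j, α j ≠ 1 := by
    intro j hj
    have hm : ((∑ i, if lam i j = 0 then 0 else a i : ℕ) : ℝ) = (T : ℝ) / 3 := by
      rw [← hfull j]
      push_cast
      apply Finset.sum_congr rfl
      intro i _
      by_cases h : lam i j = 0
      · simp [h]
      · rcases hlam i j with h' | h'
        · exact absurd h' h
        · simp [h, h', hj]
    set m : ℕ := ∑ i, if lam i j = 0 then 0 else a i with hmdef
    have h3 : (T : ℝ) = 3 * (m : ℝ) := by linarith [hm]
    have h4 : T = 3 * m := by exact_mod_cast h3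
    exact hndvd ⟨m, h4⟩
  -- classification of each object
  have hclass : ∀ i, (lam i 2 = 0 ∧ α 0 + α 1 = 1) ∨ (lam i 1 = 0 ∧ α 0 + α 2 = 1)
      ∨ (lam i 0 = 0 ∧ α 1 + α 2 = 1) := by
    intro i
    have hs := hsum1 i
    rw [Fin.sum_univ_three] at hs
    rcases hlam i 0 with h0 | h0 <;> rcases hlam i 1 with h1 | h1 <;>
      rcases hlam i 2 with h2 | h2
    · rw [h0, h1, h2] at hs; norm_num at hs
    · rw [h0, h1, h2] at hs
      exact absurd (by linarith : α 2 = 1) (hne1 2)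
    · rw [h0, h1, h2] at hs
      exact absurd (by linarith : α 1 = 1) (hne1 1)
    · exact Or.inr (Or.inr ⟨h0, by rw [h0, h1, h2] at hs; linarith⟩)
    · rw [h0, h1, h2] at hs
      exact absurd (by linarith : α 0 = 1) (hne1 0)
    · exact Or.inr (Or.inl ⟨h1, by rw [h0, h1, h2] at hs; linarith⟩)
    · exact Or.inl ⟨h2, by rw [h0, h1, h2] at hs; linarith⟩
    · -- all three nonzero: contradicts hk2
      exfalso
      have hfil : (Finset.univ.filter (fun j => lam i j ≠ 0)) = Finset.univ := by
        apply Finset.filter_true_of_mem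
        intro j _
        fin_cases j
        · show lam i 0 ≠ 0; rw [h0]; exact ne_of_gt (hα 0).1
        · show lam i 1 ≠ 0; rw [h1]; exact ne_of_gt (hα 1).1
        · show lam i 2 ≠ 0; rw [h2]; exact ne_of_gt (hα 2).1
      have := hk2 i
      rw [hfil] at this
      simp at this
  -- every bin is nonempty
  have hbin : ∀ j, ∃ i, lam i j ≠ 0 := by
    intro j
    by_contra h
    push_neg at h
    have hf := hfull j
    simp only [h, mul_zero, Finset.sum_const_zero] at hf
    exact hT3 hf.symm
  refine ⟨hne1, ?_⟩
  have hlt1 : ∀ j, α j < 1 := fun j => lt_of_le_of_ne (hα j).2 (hne1 j)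
  obtain ⟨i0, h0⟩ := hbin 0
  obtain ⟨i1, h1⟩ := hbin 1
  obtain ⟨i2, h2⟩ := hbin 2
  have c2 : α 0 + α 2 = 1 ∨ α 1 + α 2 = 1 := by
    rcases hclass i2 with ⟨hz, _⟩ | ⟨_, hs⟩ | ⟨_, hs⟩
    · exact absurd hz h2
    · exact Or.inl hs
    · exact Or.inr hs
  have c1 : α 0 + α 1 = 1 ∨ α 1 + α 2 = 1 := by
    rcases hclass i1 with ⟨_, hs⟩ | ⟨hz, _⟩ | ⟨_, hs⟩
    · exact Or.inl hs
    · exact absurd hz h1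
    · exact Or.inr hs
  have c0 : α 0 + α 1 = 1 ∨ α 0 + α 2 = 1 := by
    rcases hclass i0 with ⟨_, hs⟩ | ⟨_, hs⟩ | ⟨hz, _⟩
    · exact Or.inl hs
    · exact Or.inr hs
    · exact absurd hz h0
  rcases c2 with hA | hA
  · rcases c1 with hB | hB
    · -- α0+α2=1, α0+α1=1 ⇒ α1=α2, β = α1
      refine ⟨α 1, ⟨(hα 1).1, hlt1 1⟩, ?_⟩
      have e2 : α 2 = α 1 := by linarith
      have e0 : α 0 = 1 - α 1 := by linarith
      rw [e2, e0]
      exact perm3a (α 1) (1 - α 1)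
    · -- α0+α2=1, α1+α2=1 ⇒ α0=α1, β = α0
      refine ⟨α 0, ⟨(hα 0).1, hlt1 0⟩, ?_⟩
      have e1 : α 1 = α 0 := by linarith
      have e2 : α 2 = 1 - α 0 := by linarith
      rw [e1, e2]
  · rcases c0 with hB | hB
    · -- α1+α2=1, α0+α1=1 ⇒ α0=α2, β = α2
      refine ⟨α 2, ⟨(hα 2).1, hlt1 2⟩, ?_⟩
      have e0 : α 0 = α 2 := by linarith
      have e1 : α 1 = 1 - α 2 := by linarith
      rw [e0, e1]
      exact perm3b (α 2) (1 - α 2)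
    · -- α1+α2=1, α0+α2=1 ⇒ α0=α1, β = α0
      refine ⟨α 0, ⟨(hα 0).1, hlt1 0⟩, ?_⟩
      have e1 : α 1 = α 0 := by linarith
      have e2 : α 2 = 1 - α 0 := by linarith
      rw [e1, e2]
end

section
/- Let A be a multiset of positive integers with sum S divisible by 3 and each element at most 2S/3, with S > 3. Let r = S mod 2, A' = A ∪ {2S/3+r+1, 2S/3+r+1, 2S/3+r+1}, and S' = 3(S+r+1). Then S' is odd, every element of A' is strictly less than 3(S+r+1)/4 (the bin capacity S'/4), and no sub-multiset of A' of sum S'/3 can contain two or more copies of the element 2S/3+r+1. -/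
/-- Arithmetic facts underlying the k = 3 reduction: for `A` a multiset of positive
integers with sum `S` divisible by 3, `S > 3`, each element at most `2S/3`, `r = S % 2`,
`b = 2S/3 + r + 1`, `A' = A + {b, b, b}` and `S' = 3(S+r+1)`: `S'` is odd, every element
of `A'` is strictly less than the bin capacity `S'/4 = 3(S+r+1)/4`, and no sub-multiset
of `A'` of sum `S'/3 = S+r+1` contains two or more copies of `b`. -/
theorem reduction_arithmetic_facts
    (A : Multiset ℕ) (hpos : ∀ x ∈ A, 0 < x) (S : ℕ) (hS : S = A.sum)
    (hdvd : 3 ∣ S) (hS3 : 3 < S) (hmaxA : ∀ x ∈ A, 3 * x ≤ 2 * S)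
    (r : ℕ) (hr : r = S % 2)
    (b : ℕ) (hb : b = 2 * (S / 3) + r + 1)
    (A' : Multiset ℕ) (hA' : A' = A + {b, b, b})
    (S' : ℕ) (hS' : S' = 3 * (S + r + 1)) :
    Odd S' ∧
    (∀ x ∈ A', (x : ℝ) < 3 * ((S : ℝ) + r + 1) / 4) ∧
    (∀ I' ≤ A', I'.sum = S + r + 1 → Multiset.count b I' < 2) := by
  obtain ⟨t, ht⟩ := hdvd
  have hbval : 4 * b < 3 * (S + r + 1) := by omega
  refine ⟨⟨(3 * (S + r + 1) - 1) / 2, by omega⟩, ?_, ?_⟩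
  · intro x hx
    have h4 : 4 * x < 3 * (S + r + 1) := by
      rw [hA', Multiset.mem_add] at hx
      rcases hx with hx | hx
      · have := hmaxA x hx
        omega
      · have : x = b := by
          simp only [Multiset.insert_eq_cons, Multiset.mem_cons,
            Multiset.mem_singleton] at hx
          tauto
        omega
    have : ((4 * x : ℕ) : ℝ) < ((3 * (S + r + 1) : ℕ) : ℝ) := by exact_mod_cast h4
    push_cast at this
    linarith
  · intro I' hle hsum
    by_contra h
    push_neg at h
    have hrep : Multiset.replicate 2 b ≤ I' := Multiset.le_count_iff_replicate_le.mp h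
    obtain ⟨u, hu⟩ := Multiset.le_iff_exists_add.mp hrep
    have : I'.sum = 2 * b + u.sum := by
      rw [hu, Multiset.sum_add, Multiset.sum_replicate]; ring
    omega
end

section
/- Let A be a multiset of positive integers with sum S divisible by 3, r = S mod 2, and A' = A ∪ {2S/3+r+1, 2S/3+r+1, 2S/3+r+1} with sum S' = 3(S+r+1). If I' ⊆ A' is a sub-multiset with sum S'/3, then I' contains exactly one copy of the element 2S/3+r+1, and I' minus that copy is a sub-multiset of A with sum S/3. -/
/-- Key counting step of the k = 3 reduction: with `A` a multiset of positive integers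
of sum `S` divisible by 3, elements at most `2S/3`, `r = S % 2`, `b = 2S/3 + r + 1` and
`A' = A + {b, b, b}` of sum `S' = 3(S+r+1)`, any sub-multiset `I' ≤ A'` with sum
`S'/3 = S+r+1` contains exactly one copy of `b`, and `I'` minus that copy is a
sub-multiset of `A` of sum `S/3`. -/
theorem subset_sum_extraction
    (A : Multiset ℕ) (hpos : ∀ x ∈ A, 0 < x) (S : ℕ) (hS : S = A.sum)
    (hdvd : 3 ∣ S) (hmaxA : ∀ x ∈ A, 3 * x ≤ 2 * S)
    (r : ℕ) (hr : r = S % 2)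
    (b : ℕ) (hb : b = 2 * (S / 3) + r + 1)
    (A' : Multiset ℕ) (hA' : A' = A + {b, b, b})
    (I' : Multiset ℕ) (hI' : I' ≤ A') (hIsum : I'.sum = S + r + 1) :
    Multiset.count b I' = 1 ∧ I'.erase b ≤ A ∧ (I'.erase b).sum = S / 3 := by
  obtain ⟨m, hm⟩ := hdvd
  have hm3 : S / 3 = m := by omega
  have hbA : b ∉ A := by
    intro h
    have := hmaxA b h
    omega
  have hcountA : Multiset.count b A = 0 := Multiset.count_eq_zero.2 hbA
  have hcxA' : ∀ x, Multiset.count x A' =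
      Multiset.count x A + if x = b then 3 else 0 := by
    intro x
    subst hA'
    by_cases hxb : x = b <;> simp [Multiset.count_add, Multiset.count_cons, hxb]
  have hcI3 : Multiset.count b I' ≤ 3 := by
    have h1 := Multiset.count_le_of_le b hI'
    have h2 := hcxA' b
    simp at h2
    omega
  have hone : 1 ≤ Multiset.count b I' := by
    by_contra h
    push_neg at h
    have h0 : Multiset.count b I' = 0 := by omega
    have hle : I' ≤ A := by
      rw [Multiset.le_iff_count]
      intro x
      have hx := Multiset.count_le_of_le x hI'
      rw [hcxA' x] at hx
      by_cases hxb : x = b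
      · subst hxb; omega
      · simpa [hxb] using hx
    obtain ⟨u, hu⟩ := Multiset.le_iff_exists_add.1 hle
    have : A.sum = I'.sum + u.sum := by rw [hu]; simp
    omega
  have htwo : Multiset.count b I' < 2 := by
    by_contra h
    push_neg at h
    have hrep : Multiset.replicate 2 b ≤ I' := Multiset.le_count_iff_replicate_le.1 h
    obtain ⟨u, hu⟩ := Multiset.le_iff_exists_add.1 hrep
    have h2 : I'.sum = b + b + u.sum := by rw [hu]; simp [Multiset.sum_replicate]; ring
    omega
  have hcount1 : Multiset.count b I' = 1 := by omega
  have hbI : b ∈ I' := by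
    rw [← Multiset.count_pos]; omega
  have hsum : b + (I'.erase b).sum = I'.sum := by
    conv_rhs => rw [← Multiset.cons_erase hbI]
    simp
  refine ⟨hcount1, ?_, by omega⟩
  rw [Multiset.le_iff_count]
  intro x
  have hx := Multiset.count_le_of_le x hI'
  rw [hcxA' x] at hx
  by_cases hxb : x = b
  · subst hxb
    rw [Multiset.count_erase_self]
    omega
  · rw [Multiset.count_erase_of_ne hxb]
    simpa [hxb] using hx
end

section
/- Let A be a multiset of positive integers with sum S divisible by 3, r = S mod 2, and A' = A ∪ {2S/3+r+1, 2S/3+r+1, 2S/3+r+1}. If I ⊆ A has sum S/3, then the following allocation is a valid balanced fractional packing of A' into 4 bins of capacity S'/4 = 3(S+r+1)/4, each object split across at most 3 bins: bin 1 gets 1/4 of every element of A'; bin 2 gets 3/4 of every element of I ∪ {2S/3+r+1}; bins 3 and 4 each get 3/8 of every element of (A∖I) ∪ {2S/3+r+1, 2S/3+r+1}. -/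
/-! Since `b = 2S/3 + r + 1`, the objects `I + {b}` sum to `S + r + 1` and the remaining ones
to twice that. So bin 1 receives `(1/4)·3(S+r+1)`, bin 2 receives `(3/4)(S+r+1)` and bins 3
and 4 each receive `(3/8)·2(S+r+1)`: all equal to `3(S+r+1)/4`. -/

open scoped Classical

open Finset

theorem Multiset.exists_fin_enum_add {α : Type*} (P Q : Multiset α) :
    ∃ (N : ℕ) (a : Fin N → α) (J : Finset (Fin N)),
      (List.ofFn a : Multiset α) = P + Q ∧ J.val.map a = P ∧ Jᶜ.val.map a = Q := by
  set a := Fin.append P.toList.get Q.toList.get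
  set J := univ.map (Fin.castAddEmb Q.toList.length)
  have hall : (List.ofFn a : Multiset α) = P + Q := by
    rw [List.ofFn_fin_append, List.ofFn_get, List.ofFn_get, ← Multiset.coe_add,
      Multiset.coe_toList, Multiset.coe_toList]
  have hJ : J.val.map a = P := by
    have hleft : a ∘ Fin.castAddEmb _ = P.toList.get := funext (Fin.append_left _ _)
    rw [map_val, Multiset.map_map, hleft, Fin.univ_val_map, List.ofFn_get, Multiset.coe_toList]
  have hsplit : J.val.map a + Jᶜ.val.map a = P + Q := by
    rw [← hall, ← Fin.univ_val_map, ← Multiset.map_add, ← union_compl J,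
      ← disjUnion_eq_union J Jᶜ disjoint_compl_right]
    rfl
  exact ⟨_, a, J, hall, hJ, by rwa [hJ, add_right_inj] at hsplit⟩

theorem Finset.sum_mul_ite_mem {ι R : Type*} [Fintype ι] [DecidableEq ι]
    [NonUnitalNonAssocSemiring R] (J : Finset ι) (f : ι → R) (u v : R) :
    ∑ i, f i * (if i ∈ J then u else v) = (∑ i ∈ J, f i) * u + (∑ i ∈ Jᶜ, f i) * v := by
  rw [← sum_add_sum_compl J, sum_mul, sum_mul]
  congr 1
  · exact sum_congr rfl fun i hi => by rw [if_pos hi]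
  · exact sum_congr rfl fun i hi => by rw [if_neg (mem_compl.mp hi)]

theorem Finset.card_filter_ne_zero_lt_card {α M : Type*} [Fintype α] [Zero M] {f : α → M}
    (h : ∃ k, f k = 0) : #{j | f j ≠ 0} < Fintype.card α :=
  card_lt_card (filter_ssubset.mpr (by simpa using h))

theorem explicit_four_bin_packing_general
    (A : Multiset ℕ) (S : ℕ) (hS : S = A.sum)
    (r : ℕ)
    (b : ℕ) (hb : b = 2 * (S / 3) + r + 1)
    (A' : Multiset ℕ) (hA' : A' = A + {b, b, b})
    (I : Multiset ℕ) (hI : I ≤ A) (hIsum : 3 * I.sum = S) :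
    ∃ (N : ℕ) (a : Fin N → ℕ) (lam : Fin N → Fin 4 → ℝ) (J : Finset (Fin N)),
      (↑(List.ofFn a) : Multiset ℕ) = A' ∧
      Multiset.map a J.val = I + {b} ∧
      Multiset.map a Jᶜ.val = (A - I) + {b, b} ∧
      (∀ i, lam i 0 = 1 / 4) ∧
      (∀ i ∈ J, lam i 1 = 3 / 4 ∧ lam i 2 = 0 ∧ lam i 3 = 0) ∧
      (∀ i ∉ J, lam i 1 = 0 ∧ lam i 2 = 3 / 8 ∧ lam i 3 = 3 / 8) ∧
      (∀ i, ∑ j, lam i j = 1) ∧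
      (∀ i, (Finset.univ.filter (fun j => lam i j ≠ 0)).card ≤ 3) ∧
      (∀ j, ∑ i, (a i : ℝ) * lam i j = 3 * ((S : ℝ) + r + 1) / 4) := by
  obtain ⟨N, a, J, hall, hJ, hJc⟩ := Multiset.exists_fin_enum_add (I + {b}) (A - I + {b, b})
  set lam : Fin N → Fin 4 → ℝ := fun i j =>
    if i ∈ J then ![1 / 4, 3 / 4, 0, 0] j else ![1 / 4, 0, 3 / 8, 3 / 8] j
  have hlamJ : ∀ i ∈ J, lam i 1 = 3 / 4 ∧ lam i 2 = 0 ∧ lam i 3 = 0 := by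
    intro i hi; simp [lam, hi]
  have hlamJc : ∀ i ∉ J, lam i 1 = 0 ∧ lam i 2 = 3 / 8 ∧ lam i 3 = 3 / 8 := by
    intro i hi; simp [lam, hi]
  have hsumA : (A - I).sum + I.sum = S := by
    rw [← Multiset.sum_add, tsub_add_cancel_of_le hI, hS]
  have hsumJ : ∑ i ∈ J, (a i : ℝ) = S + r + 1 := by
    have : (I + {b}).sum = S + r + 1 := by simp only [Multiset.sum_add, Multiset.sum_singleton]; omega
    rw [← Nat.cast_sum, ← sum_map_val, hJ, this]; push_cast; rfl
  have hsumJc : ∑ i ∈ Jᶜ, (a i : ℝ) = 2 * (S + r + 1) := by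
    have : (A - I + {b, b}).sum = 2 * (S + r + 1) := by simp; omega
    rw [← Nat.cast_sum, ← sum_map_val, hJc, this]; push_cast; rfl
  refine ⟨N, a, lam, J, ?_, hJ, hJc, ?_, hlamJ, hlamJc, ?_, ?_, ?_⟩
  · rw [hall, hA', add_add_add_comm, add_tsub_cancel_of_le hI]
    rfl
  · intro i; by_cases hi : i ∈ J <;> simp [lam, hi]
  · intro i; by_cases hi : i ∈ J <;> simp [lam, hi, Fin.sum_univ_four] <;> norm_num
  · intro i
    refine Nat.le_of_lt_succ (card_filter_ne_zero_lt_card ?_)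
    by_cases hi : i ∈ J
    · exact ⟨2, (hlamJ i hi).2.1⟩
    · exact ⟨1, (hlamJc i hi).1⟩
  · intro j
    simp only [lam]
    rw [sum_mul_ite_mem, hsumJ, hsumJc]
    fin_cases j <;> simp <;> ring

/-- Explicit allocation for the k = 3 reduction: if `I ⊆ A` has sum `S/3` (with `S`
divisible by 3, `r = S % 2`, `b = 2S/3+r+1`, `A' = A + {b,b,b}`), then `A'` admits a
balanced fractional packing into 4 bins of capacity `S'/4 = 3(S+r+1)/4`, each object
split across at most 3 bins: bin 1 gets `1/4` of every element of `A'`; bin 2 gets `3/4`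
of every element of `I ∪ {b}`; bins 3 and 4 each get `3/8` of every element of
`(A \ I) ∪ {b, b}`; and every bin is filled to exactly the capacity. -/
theorem explicit_four_bin_packing
    (A : Multiset ℕ) (hpos : ∀ x ∈ A, 0 < x) (S : ℕ) (hS : S = A.sum)
    (hdvd : 3 ∣ S)
    (r : ℕ) (hr : r = S % 2)
    (b : ℕ) (hb : b = 2 * (S / 3) + r + 1)
    (A' : Multiset ℕ) (hA' : A' = A + {b, b, b})
    (I : Multiset ℕ) (hI : I ≤ A) (hIsum : 3 * I.sum = S) :
    ∃ (N : ℕ) (a : Fin N → ℕ) (lam : Fin N → Fin 4 → ℝ) (J : Finset (Fin N)),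
      (↑(List.ofFn a) : Multiset ℕ) = A' ∧
      Multiset.map a J.val = I + {b} ∧
      Multiset.map a Jᶜ.val = (A - I) + {b, b} ∧
      (∀ i, lam i 0 = 1 / 4) ∧
      (∀ i ∈ J, lam i 1 = 3 / 4 ∧ lam i 2 = 0 ∧ lam i 3 = 0) ∧
      (∀ i ∉ J, lam i 1 = 0 ∧ lam i 2 = 3 / 8 ∧ lam i 3 = 3 / 8) ∧
      (∀ i, ∑ j, lam i j = 1) ∧
      (∀ i, (Finset.univ.filter (fun j => lam i j ≠ 0)).card ≤ 3) ∧
      (∀ j, ∑ i, (a i : ℝ) * lam i j = 3 * ((S : ℝ) + r + 1) / 4) :=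
  explicit_four_bin_packing_general A S hS r b hb A' hA' I hI hIsum
end

section
/- In a balanced fractional packing of integer-sized objects with total sum S' into 4 full bins of capacity S'/4 ∉ ℤ, where each object occupies at most 3 bins, if the four proportionality factors satisfy α_1 = α_4 and no two factors sum to 1, and the factors satisfy α_1 + α_2 + α_3 = 1 with α_1 = α_2 ≠ α_3, then every object is partially allocated to bin 3, forcing α_3 = 1/4 and α_1 = α_2 = α_4 = 3/8, and the set of objects not allocated to bin 1 has total size S'/3. -/
open scoped Classical

/-- Case analysis step of the k = 3 hardness proof: in a balanced fractional packing of
integer-sized objects of total sum `S'` (with `S'/4 ∉ ℤ`) into 4 full bins of capacity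
`S'/4`, each object occupying at most 3 bins, if `α_1 = α_4`, no two factors sum to 1,
`α_1 + α_2 + α_3 = 1`, and `α_1 = α_2 ≠ α_3`, then every object is partially allocated
to bin 3, forcing `α_3 = 1/4` and `α_1 = α_2 = α_4 = 3/8`, and the objects not allocated
to bin 1 have total size `S'/3`. -/
theorem four_bins_case_analysis
    (A' : Multiset ℕ) (hpos : ∀ x ∈ A', 0 < x) (S' : ℕ) (hS' : S' = A'.sum)
    (hndvd : ¬ (4 ∣ S'))
    (N : ℕ) (a : Fin N → ℕ) (ha : (↑(List.ofFn a) : Multiset ℕ) = A')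
    (α : Fin 4 → ℝ) (lam : Fin N → Fin 4 → ℝ)
    (hα : ∀ j, 0 < α j ∧ α j ≤ 1)
    (hlam : ∀ i j, lam i j = 0 ∨ lam i j = α j)
    (hsum1 : ∀ i, ∑ j, lam i j = 1)
    (hfull : ∀ j, ∑ i, (a i : ℝ) * lam i j = (S' : ℝ) / 4)
    (hk3 : ∀ i, (Finset.univ.filter (fun j => lam i j ≠ 0)).card ≤ 3)
    (h14 : α 0 = α 3)
    (hno2 : ∀ j j' : Fin 4, α j + α j' ≠ 1)
    (h123 : α 0 + α 1 + α 2 = 1)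
    (h12 : α 0 = α 1) (hne : α 0 ≠ α 2) :
    (∀ i, lam i 2 ≠ 0) ∧
    α 2 = 1 / 4 ∧ α 0 = 3 / 8 ∧ α 1 = 3 / 8 ∧ α 3 = 3 / 8 ∧
    ∑ i ∈ Finset.univ.filter (fun i => lam i 0 = 0), (a i : ℝ) = (S' : ℝ) / 3 := by
  have hα2pos := (hα 2).1
  have hα0pos := (hα 0).1
  -- total size equals S'
  have hsumN : ∑ i, (a i : ℝ) = (S' : ℝ) := by
    have h1 : A'.sum = ∑ i, a i := by
      rw [← ha, Multiset.sum_coe, List.sum_ofFn]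
    rw [hS', h1]
    exact (Nat.cast_sum _ _).symm
  have hS0 : (S' : ℝ) ≠ 0 := by
    have : S' ≠ 0 := fun h => hndvd (h ▸ dvd_zero 4)
    exact Nat.cast_ne_zero.mpr this
  -- every object is allocated to bin 2
  have hclaim : ∀ i, lam i 2 = α 2 := by
    intro i
    rcases hlam i 2 with h2 | h2
    · exfalso
      have hs := hsum1 i
      rw [Fin.sum_univ_four, h2] at hs
      rcases lt_or_gt_of_ne hne with hlt | hlt <;>
        (rcases hlam i 0 with h0 | h0 <;> rcases hlam i 1 with h1 | h1 <;>
          rcases hlam i 3 with h3 | h3 <;> rw [h0, h1, h3] at hs) <;>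
        first
          | linarith
          | exact hno2 0 1 (by linarith)
          | exact hno2 0 3 (by linarith)
          | exact hno2 1 3 (by linarith)
    · exact h2
  -- α 2 = 1/4
  have hα2 : α 2 = 1 / 4 := by
    have hf := hfull 2
    have heq : ∑ i, (a i : ℝ) * lam i 2 = (∑ i, (a i : ℝ)) * α 2 := by
      rw [Finset.sum_mul]
      exact Finset.sum_congr rfl fun i _ => by rw [hclaim i]
    rw [heq, hsumN] at hf
    have h' : (S' : ℝ) * α 2 = (S' : ℝ) * (1 / 4) := by linarith
    exact mul_left_cancel₀ hS0 h'
  have hα0 : α 0 = 3 / 8 := by linarith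
  have hα1 : α 1 = 3 / 8 := by linarith
  have hα3 : α 3 = 3 / 8 := by linarith
  refine ⟨fun i => by rw [hclaim i]; exact ne_of_gt hα2pos, hα2, hα0, hα1, hα3, ?_⟩
  -- split bin 0's contents
  have hsplit : ∑ i ∈ Finset.univ.filter (fun i => lam i 0 = 0), (a i : ℝ)
      + ∑ i ∈ Finset.univ.filter (fun i => ¬ lam i 0 = 0), (a i : ℝ) = (S' : ℝ) := by
    rw [Finset.sum_filter_add_sum_filter_not]
    exact hsumN
  have hful0 := hfull 0
  rw [← Finset.sum_filter_add_sum_filter_not Finset.univ (fun i => lam i 0 = 0)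
      (fun i => (a i : ℝ) * lam i 0)] at hful0
  have h0sum : ∑ i ∈ Finset.univ.filter (fun i => lam i 0 = 0), (a i : ℝ) * lam i 0 = 0 :=
    Finset.sum_eq_zero fun i hi => by
      rw [Finset.mem_filter] at hi
      rw [hi.2, mul_zero]
  have h1sum : ∑ i ∈ Finset.univ.filter (fun i => ¬ lam i 0 = 0), (a i : ℝ) * lam i 0
      = (3 / 8) * ∑ i ∈ Finset.univ.filter (fun i => ¬ lam i 0 = 0), (a i : ℝ) := by
    rw [Finset.mul_sum]
    refine Finset.sum_congr rfl fun i hi => ?_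
    rw [Finset.mem_filter] at hi
    rcases hlam i 0 with h | h
    · exact absurd h hi.2
    · rw [h, hα0]; ring
  rw [h0sum, h1sum] at hful0
  linarith
end

section
/- In the two-stage distribution algorithm, the coefficients satisfy the invariant: for every step ℓ, 0 ≤ λ_ℓ¹ ≤ min{1, C̃/C_{σ(ℓ)}}, where λ_ℓ¹ = (S_ℓ − (ℓ−1)C̃)/C_{σ(ℓ)}, S_ℓ = C_{σ(1)} + ... + C_{σ(ℓ)} + (C̃ − C_max) for the running selection, provided max_j C_j − min_j C_j ≤ C̃. -/
/-- Invariant of the two-stage distribution algorithm (0-indexed): given positive group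
sizes `C j` with average `C̃`, `Cmax - Cmin ≤ C̃`, and an ordering `σ` produced by the
algorithm (σ 0 is a smallest `C j ≥ C̃`; at each later step, if the running sum
`S ℓ ≤ (ℓ+2)C̃ - Cmax` pick the smallest remaining `C j ≥ C̃`, else the largest remaining
`C j ≤ C̃`), where `S ℓ = (∑_{t ≤ ℓ} C (σ t)) + C̃ - Cmax`, the coefficients
`λ_ℓ¹ = (S ℓ - ℓ·C̃)/C (σ ℓ)` satisfy `0 ≤ λ_ℓ¹ ≤ min 1 (C̃ / C (σ ℓ))` for every `ℓ`. -/
theorem distribution_invariant (m : ℕ) (hm : 0 < m)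
    (C : Fin m → ℝ) (hC : ∀ j, 0 < C j)
    (Cavg Cmax Cmin : ℝ)
    (havg : Cavg = (∑ j, C j) / m)
    (hmaxub : ∀ j, C j ≤ Cmax) (hmaxmem : ∃ j, C j = Cmax)
    (hminlb : ∀ j, Cmin ≤ C j) (hminmem : ∃ j, C j = Cmin)
    (hgap : Cmax - Cmin ≤ Cavg)
    (σ : Equiv.Perm (Fin m))
    (S : ℕ → ℝ)
    (hSdef : ∀ ℓ : ℕ,
      S ℓ = (∑ t ∈ Finset.univ.filter (fun t : Fin m => (t : ℕ) ≤ ℓ), C (σ t)) + Cavg - Cmax)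
    (hσ0 : Cavg ≤ C (σ ⟨0, hm⟩) ∧ ∀ j, Cavg ≤ C j → C (σ ⟨0, hm⟩) ≤ C j)
    (hstep : ∀ ℓ : Fin m, ∀ h1 : (ℓ : ℕ) + 1 < m,
      (S ℓ ≤ ((ℓ : ℕ) + 2) * Cavg - Cmax →
        Cavg ≤ C (σ ⟨(ℓ : ℕ) + 1, h1⟩) ∧
        ∀ j : Fin m, (∀ t : Fin m, (t : ℕ) ≤ (ℓ : ℕ) → σ t ≠ j) →
          Cavg ≤ C j → C (σ ⟨(ℓ : ℕ) + 1, h1⟩) ≤ C j) ∧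
      (¬ S ℓ ≤ ((ℓ : ℕ) + 2) * Cavg - Cmax →
        C (σ ⟨(ℓ : ℕ) + 1, h1⟩) ≤ Cavg ∧
        ∀ j : Fin m, (∀ t : Fin m, (t : ℕ) ≤ (ℓ : ℕ) → σ t ≠ j) →
          C j ≤ Cavg → C j ≤ C (σ ⟨(ℓ : ℕ) + 1, h1⟩))) :
    ∀ ℓ : Fin m,
      0 ≤ (S ℓ - (ℓ : ℕ) * Cavg) / C (σ ℓ) ∧
      (S ℓ - (ℓ : ℕ) * Cavg) / C (σ ℓ) ≤ min 1 (Cavg / C (σ ℓ)) := by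
  -- basic facts
  have hCavg_le_Cmax : Cavg ≤ Cmax := by
    obtain ⟨j0, hj0⟩ := hmaxmem
    rw [havg, div_le_iff₀ (by exact_mod_cast hm)]
    calc ∑ j, C j ≤ ∑ _j : Fin m, Cmax := Finset.sum_le_sum fun j _ => hmaxub j
    _ = Cmax * m := by simp [mul_comm]
  have hgap' : Cmax - Cavg ≤ Cmin := by linarith
  -- the key invariant on D n = S n - n * Cavg
  have key : ∀ n : ℕ, ∀ h : n < m,
      0 ≤ S n - n * Cavg ∧ S n - n * Cavg ≤ Cavg ∧ S n - n * Cavg ≤ C (σ ⟨n, h⟩) := by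
    intro n
    induction n with
    | zero =>
      intro h
      have hfil : (Finset.univ.filter (fun t : Fin m => (t : ℕ) ≤ 0)) = {⟨0, hm⟩} := by
        ext t
        simp [Fin.ext_iff, Nat.le_zero]
      have hS0 : S 0 = C (σ ⟨0, hm⟩) + Cavg - Cmax := by
        rw [hSdef 0, hfil, Finset.sum_singleton]
      have h1 : Cmin ≤ C (σ ⟨0, hm⟩) := hminlb _
      have h2 : C (σ ⟨0, hm⟩) ≤ Cmax := hmaxub _
      refine ⟨by rw [hS0]; push_cast; linarith, by rw [hS0]; push_cast; linarith,
        by rw [hS0]; push_cast; linarith⟩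
    | succ n ih =>
      intro h
      have hn : n < m := Nat.lt_of_succ_lt h
      obtain ⟨ih0, ih1, ih2⟩ := ih hn
      -- sum recurrence
      have hfil : (Finset.univ.filter (fun t : Fin m => (t : ℕ) ≤ n + 1)) =
          insert ⟨n + 1, h⟩ (Finset.univ.filter (fun t : Fin m => (t : ℕ) ≤ n)) := by
        ext t
        simp only [Finset.mem_filter, Finset.mem_univ, true_and, Finset.mem_insert,
          Fin.ext_iff]
        omega
      have hnotmem : (⟨n + 1, h⟩ : Fin m) ∉
          Finset.univ.filter (fun t : Fin m => (t : ℕ) ≤ n) := by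
        simp
      have hSrec : S (n + 1) = S n + C (σ ⟨n + 1, h⟩) := by
        rw [hSdef (n + 1), hSdef n, hfil, Finset.sum_insert hnotmem]
        ring
      -- apply hstep at ℓ = ⟨n, hn⟩
      have hstep' := hstep ⟨n, hn⟩ (by simpa using h)
      by_cases hc : S n ≤ ((n : ℝ) + 2) * Cavg - Cmax
      · have hpick : Cavg ≤ C (σ ⟨n + 1, h⟩) := by
          have := (hstep'.1 (by simpa using hc)).1
          simpa using this
        have hub : C (σ ⟨n + 1, h⟩) ≤ Cmax := hmaxub _
        refine ⟨?_, ?_, ?_⟩ <;> (rw [hSrec]; push_cast; push_cast at hc; nlinarith)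
      · have hpick : C (σ ⟨n + 1, h⟩) ≤ Cavg := by
          have := (hstep'.2 (by simpa using hc)).1
          simpa using this
        have hlb : Cmin ≤ C (σ ⟨n + 1, h⟩) := hminlb _
        push_cast at hc
        have hc' : ((n : ℝ) + 2) * Cavg - Cmax < S n := lt_of_not_ge hc
        refine ⟨?_, ?_, ?_⟩ <;> (rw [hSrec]; push_cast; nlinarith)
    -- conclude
  intro ℓ
  obtain ⟨h0, h1, h2⟩ := key ℓ ℓ.isLt
  have hℓ : (⟨(ℓ : ℕ), ℓ.isLt⟩ : Fin m) = ℓ := rfl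
  rw [hℓ] at h2
  have hCpos : 0 < C (σ ℓ) := hC _
  constructor
  · exact div_nonneg h0 hCpos.le
  · refine le_min ?_ ?_
    · rw [div_le_one hCpos]; exact h2
    · gcongr
end

section
/- For positive reals a_1 ≥ a_2 ≥ ... ≥ a_n with sum S, capacity C ≥ a_1 − a_n, and m = ⌈S/C⌉ ≤ n: if the balanced two-stage allocation exists for any instance with a_1 − a_n ≤ S/m, then it exists for the instance (a_1,...,a_n) with capacity C. -/
/-- A balanced two-stage allocation of objects `a` to `m` bins of capacity `Cap`:
fractions in `[0,1]` summing to 1 per object, each object split across at most 2 bins,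
no bin exceeding `Cap`, and at most two distinct proportionality coefficients per bin
(one per stage). -/
def TwoStageAlloc (n m : ℕ) (a : Fin n → ℝ) (Cap : ℝ) : Prop :=
  ∃ lam : Fin n → Fin m → ℝ,
    (∀ i j, lam i j ∈ Set.Icc (0 : ℝ) 1) ∧
    (∀ i, ∑ j, lam i j = 1) ∧
    (∀ i, ∃ s : Finset (Fin m), s.card ≤ 2 ∧ ∀ j ∉ s, lam i j = 0) ∧
    (∀ j, ∑ i, a i * lam i j ≤ Cap) ∧
    (∃ α β : Fin m → ℝ, ∀ i j, lam i j = 0 ∨ lam i j = α j ∨ lam i j = β j)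

/-- Reduction step in the proof of Theorem 2: for positive decreasing sizes `a` with sum
`S`, capacity `C ≥ a 0 - a (n-1)` and `m = ⌈S/C⌉ ≤ n`, if the balanced two-stage
allocation (into `m` bins of capacity equal to the average load) exists for every
instance with gap at most the average, then it exists for `(a, C)`. -/
theorem reduction_to_small_gap (n m : ℕ) (hn : 0 < n)
    (a : Fin n → ℝ) (ha_pos : ∀ i, 0 < a i) (ha_sorted : Antitone a)
    (C : ℝ) (hC : 0 < C)
    (hgap : a ⟨0, hn⟩ - a ⟨n - 1, Nat.sub_lt hn Nat.one_pos⟩ ≤ C)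
    (hm : m = ⌈(∑ i, a i) / C⌉₊) (hmn : m ≤ n)
    (H : ∀ b : Fin n → ℝ, Antitone b → (∀ i, 0 < b i) →
      b ⟨0, hn⟩ - b ⟨n - 1, Nat.sub_lt hn Nat.one_pos⟩ ≤ (∑ i, b i) / m →
      TwoStageAlloc n m b ((∑ i, b i) / m)) :
    TwoStageAlloc n m a C := by
  set A0 := a ⟨0, hn⟩ with hA0
  set An := a ⟨n - 1, Nat.sub_lt hn Nat.one_pos⟩ with hAn
  have hS : 0 < ∑ i, a i :=
    Finset.sum_pos (fun i _ => ha_pos i) ⟨⟨0, hn⟩, Finset.mem_univ _⟩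
  have hm0 : 0 < m := by
    rw [hm]; exact Nat.ceil_pos.mpr (div_pos hS hC)
  have hmR : (0 : ℝ) < (m : ℝ) := by exact_mod_cast hm0
  have hSmC : (∑ i, a i) ≤ (m : ℝ) * C := by
    have := Nat.le_ceil ((∑ i, a i) / C)
    rw [← hm] at this
    rw [div_le_iff₀ hC] at this
    linarith
  -- every a i is at least An
  have hAn_le : ∀ i, An ≤ a i := by
    intro i
    apply ha_sorted
    exact Fin.mk_le_of_le_val (Nat.le_sub_one_of_lt i.isLt)
  have hA0_ge : ∀ i, a i ≤ A0 := by
    intro i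
    apply ha_sorted
    exact Fin.mk_le_of_le_val (Nat.zero_le _)
  -- the function for IVT
  set f : ℝ → ℝ := fun t => (∑ i, max (a i) t) / m + t with hf
  have hcont : Continuous f := by
    apply Continuous.add _ continuous_id
    apply Continuous.div_const
    exact continuous_finset_sum _ fun i _ => (continuous_const.max continuous_id)
  have hfl : f (A0 - C) ≤ A0 := by
    have heq : (∑ i, max (a i) (A0 - C)) = ∑ i, a i := by
      apply Finset.sum_congr rfl
      intro i _
      exact max_eq_left (by have := hAn_le i; linarith)
    simp only [hf, heq]
    have : (∑ i, a i) / m ≤ C := by rw [div_le_iff₀ hmR]; linarith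
    linarith
  have hfr : A0 ≤ f A0 := by
    have h0 : 0 ≤ (∑ i, max (a i) A0) / m := by
      apply div_nonneg _ hmR.le
      exact Finset.sum_nonneg fun i _ => le_trans (ha_pos i).le (le_max_left _ _)
    simp only [hf]
    linarith
  have hsub : Set.Icc (f (A0 - C)) (f A0) ⊆ f '' Set.Icc (A0 - C) A0 :=
    intermediate_value_Icc (by linarith) hcont.continuousOn
  obtain ⟨t, ht, hft⟩ := hsub ⟨hfl, hfr⟩
  -- the modified instance
  set b : Fin n → ℝ := fun i => max (a i) t with hb
  have hb_pos : ∀ i, 0 < b i := fun i => lt_of_lt_of_le (ha_pos i) (le_max_left _ _)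
  have hb_anti : Antitone b := fun i j hij => max_le_max (ha_sorted hij) le_rfl
  have hsumb : (∑ i, b i) / m = A0 - t := by
    have : (∑ i, b i) / m + t = A0 := hft
    linarith
  have hb0 : b ⟨0, hn⟩ = A0 := max_eq_left ht.2
  have hbgap : b ⟨0, hn⟩ - b ⟨n - 1, Nat.sub_lt hn Nat.one_pos⟩ ≤ (∑ i, b i) / m := by
    rw [hb0, hsumb]
    have : t ≤ b ⟨n - 1, Nat.sub_lt hn Nat.one_pos⟩ := le_max_right _ _
    linarith
  obtain ⟨lam, h01, hsum1, hsupp, hload, hαβ⟩ := H b hb_anti hb_pos hbgap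
  refine ⟨lam, h01, hsum1, hsupp, ?_, hαβ⟩
  intro j
  have h1 : ∑ i, a i * lam i j ≤ ∑ i, b i * lam i j := by
    apply Finset.sum_le_sum
    intro i _
    exact mul_le_mul_of_nonneg_right (le_max_left _ _) (h01 i j).1
  have h2 : (∑ i, b i) / m ≤ C := by
    rw [hsumb]; linarith [ht.1]
  linarith [hload j]
end
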